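/- arXiv:2012.13578 — 10 statements merged into one kernel-verified Lean document; each statement's English description precedes it below -/
import Mathlib

section
/- For every c in the open interval (-1/3, 0), the function a ↦ Γ(a, a+c)/Γ(a) is not monotonic on (-c, ∞). -/
/-!
Write `f a = Γ(a, a + c) / Γ(a)` and `s = -c ∈ (0, 1/3)`.

`f` is not increasing: `f 1 = e^{-(1 - s)} < 3/5`, while for `a = s + δ` with `δ` tiny,
`1 - f a = γ(a, δ) / Γ(a) ≤ δ^a / Γ(a + 1) ≤ e δ^a` is small.

`f` is not decreasing: with `x = a - s`, the identities `Γ(a + 1, x) = x^a e^{-x} + a Γ(a, x)` and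
`Γ(a + 1, x) = ∫_x^{x+1} t^a e^{-t} dt + Γ(a + 1, x + 1)` give `f a < f (a + 1)` as soon as
`∫_x^{x+1} t^a e^{-t} dt < x^a e^{-x}`. With `t = x + u`, the ratio `t^a e^{-t} / (x^a e^{-x})`
is `1 + s u / x - u² / (2x) + O(1/x²)`, whose mean over `[0, 1]` is
`1 - (1/6 - s/2) / x + O(1/x²)`: below `1` for large `x` precisely because `s < 1/3`.
-/

open Real MeasureTheory Set Filter

noncomputable def uIG (a x : ℝ) : ℝ := ∫ t in Set.Ioi x, t ^ (a - 1) * Real.exp (-t)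

open Topology

lemma log_one_add_le {v : ℝ} (hv : 0 ≤ v) : log (1 + v) ≤ v - v ^ 2 / 2 + v ^ 3 / 3 := by
  let g : ℝ → ℝ := fun w => w - w ^ 2 / 2 + w ^ 3 / 3 - log (1 + w)
  have hderiv : ∀ w ∈ Ici (0:ℝ), HasDerivAt g (w ^ 3 / (1 + w)) w := fun w hw => by
    have hw : (0:ℝ) < 1 + w := by linarith [mem_Ici.1 hw]
    have := ((((hasDerivAt_id w).sub ((hasDerivAt_pow 2 w).div_const 2)).add
      ((hasDerivAt_pow 3 w).div_const 3)).sub (((hasDerivAt_id w).const_add 1).log hw.ne'))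
    refine this.congr_deriv ?_
    simp only [id]
    field_simp
    ring
  have hmono : MonotoneOn g (Ici 0) :=
    monotoneOn_of_hasDerivWithinAt_nonneg (convex_Ici 0)
      (fun w hw => (hderiv w hw).continuousAt.continuousWithinAt)
      (fun w hw => (hderiv w (interior_subset hw)).hasDerivWithinAt)
      (fun w hw => by
        have : 0 ≤ w := interior_subset hw
        positivity)
  have := hmono self_mem_Ici hv hv
  simp only [g] at this
  norm_num at this
  linarith

lemma exp_le_one_add_add_sq {z : ℝ} (hz : |z| ≤ 1) : exp z ≤ 1 + z + z ^ 2 := by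
  linarith [(abs_le.1 (abs_exp_sub_one_sub_id_le hz)).2]

lemma exp_mul_sub_mul_sq_le {α β u : ℝ} (hα : 0 ≤ α) (hβ : 0 ≤ β) (hαβ : α + β ≤ 1)
    (hu₀ : 0 ≤ u) (hu₁ : u ≤ 1) :
    exp (α * u - β * u ^ 2) ≤ 1 + α * u + ((α + β) ^ 2 - β) * u ^ 2 := by
  have hz : |α * u - β * u ^ 2| ≤ (α + β) * u := abs_le.2
    ⟨by nlinarith [mul_nonneg hα hu₀, mul_nonneg hβ (mul_nonneg hu₀ (sub_nonneg.2 hu₁))],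
      by nlinarith [mul_nonneg hβ (sq_nonneg u), mul_nonneg hβ hu₀]⟩
  have hz₁ : |α * u - β * u ^ 2| ≤ 1 := hz.trans (by nlinarith)
  have hz₂ : (α * u - β * u ^ 2) ^ 2 ≤ (α + β) ^ 2 * u ^ 2 := by
    rw [← sq_abs, ← mul_pow]
    exact pow_le_pow_left₀ (abs_nonneg _) hz 2
  linarith [exp_le_one_add_add_sq hz₁]

lemma integral_one_add_mul_add_mul_sq (α γ : ℝ) :
    ∫ u in (0:ℝ)..1, (1 + α * u + γ * u ^ 2) = 1 + α / 2 + γ / 3 := by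
  have hi : ∀ f : ℝ → ℝ, Continuous f → IntervalIntegrable f volume 0 1 :=
    fun f hf => hf.intervalIntegrable _ _
  rw [intervalIntegral.integral_add (hi _ (by fun_prop)) (hi _ (by fun_prop)),
    intervalIntegral.integral_add (hi _ (by fun_prop)) (hi _ (by fun_prop)),
    intervalIntegral.integral_const_mul, intervalIntegral.integral_const_mul]
  norm_num [integral_pow]
  ring

section
variable {a b x y : ℝ}

lemma integrableOn_rpow_mul_exp_neg_Ioi (ha : 0 < a) (hx : 0 ≤ x) :
    IntegrableOn (fun t : ℝ => t ^ (a - 1) * exp (-t)) (Ioi x) :=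
  ((GammaIntegral_convergent ha).mono_set (Ioi_subset_Ioi hx)).congr_fun
    (fun _ _ => mul_comm _ _) measurableSet_Ioi

lemma uIG_zero_right (ha : 0 < a) : uIG a 0 = Gamma a := by
  rw [Gamma_eq_integral ha, uIG]
  exact setIntegral_congr_fun measurableSet_Ioi fun _ _ => mul_comm _ _

lemma uIG_one_left (x : ℝ) : uIG 1 x = exp (-x) := by
  simp only [uIG, sub_self, rpow_zero, one_mul]
  exact integral_exp_neg_Ioi x

lemma uIG_eq_intervalIntegral_add (ha : 0 < a) (hx : 0 ≤ x) (hxy : x ≤ y) :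
    uIG a x = (∫ t in x..y, t ^ (a - 1) * exp (-t)) + uIG a y :=
  (intervalIntegral.integral_interval_add_Ioi (integrableOn_rpow_mul_exp_neg_Ioi ha hx)
    (integrableOn_rpow_mul_exp_neg_Ioi ha (hx.trans hxy))).symm

lemma uIG_le_uIG_of_le_right (ha : 0 < a) (hx : 0 ≤ x) (hxy : x ≤ y) : uIG a y ≤ uIG a x := by
  rw [uIG_eq_intervalIntegral_add ha hx hxy, le_add_iff_nonneg_left]
  exact intervalIntegral.integral_nonneg hxy fun t ht => by
    have : 0 ≤ t := hx.trans ht.1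
    positivity

lemma uIG_le_uIG_of_le_left (ha : 0 < a) (hab : a ≤ b) (hx : 1 ≤ x) : uIG a x ≤ uIG b x :=
  setIntegral_mono_on (integrableOn_rpow_mul_exp_neg_Ioi ha (by linarith))
    (integrableOn_rpow_mul_exp_neg_Ioi (ha.trans_le hab) (by linarith)) measurableSet_Ioi
    fun t ht => by
      gcongr
      exact hx.trans ht.le

lemma exp_neg_one_le_Gamma_add_one (ha : 0 ≤ a) : exp (-1) ≤ Gamma (a + 1) := by
  have ha₁ : 0 < a + 1 := by linarith
  calc exp (-1) = uIG 1 1 := (uIG_one_left 1).symm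
    _ ≤ uIG (a + 1) 1 := uIG_le_uIG_of_le_left one_pos (by linarith) le_rfl
    _ ≤ uIG (a + 1) 0 := uIG_le_uIG_of_le_right ha₁ le_rfl zero_le_one
    _ = Gamma (a + 1) := uIG_zero_right ha₁

lemma Gamma_sub_uIG_le (ha : 0 < a) (hy : 0 ≤ y) : Gamma a - uIG a y ≤ y ^ a / a := by
  have hr : -1 < a - 1 := by linarith
  rw [← uIG_zero_right ha, uIG_eq_intervalIntegral_add ha le_rfl hy, add_sub_cancel_right]
  calc (∫ t in (0:ℝ)..y, t ^ (a - 1) * exp (-t)) ≤ ∫ t in (0:ℝ)..y, t ^ (a - 1) := by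
        refine intervalIntegral.integral_mono_on hy ?_
          (intervalIntegral.intervalIntegrable_rpow' hr) fun t ht =>
            mul_le_of_le_one_right (rpow_nonneg ht.1 _) (exp_le_one_iff.2 (by linarith [ht.1]))
        exact (intervalIntegrable_iff_integrableOn_Ioc_of_le hy).2
          ((integrableOn_rpow_mul_exp_neg_Ioi ha le_rfl).mono_set Ioc_subset_Ioi_self)
    _ = y ^ a / a := by
        rw [integral_rpow (Or.inl hr), zero_rpow (by linarith), sub_add_cancel, sub_zero]

lemma one_sub_uIG_div_Gamma_le (ha : 0 < a) (hy : 0 ≤ y) :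
    1 - uIG a y / Gamma a ≤ exp 1 * y ^ a := by
  have hΓ := Gamma_pos_of_pos ha
  calc 1 - uIG a y / Gamma a = (Gamma a - uIG a y) / Gamma a := by field_simp
    _ ≤ y ^ a / a / Gamma a := by gcongr; exact Gamma_sub_uIG_le ha hy
    _ = y ^ a / Gamma (a + 1) := by rw [div_div, Gamma_add_one ha.ne']
    _ ≤ y ^ a / exp (-1) := by gcongr; exact exp_neg_one_le_Gamma_add_one ha.le
    _ = exp 1 * y ^ a := by rw [exp_neg, div_inv_eq_mul, mul_comm]

lemma uIG_add_one (ha : 0 < a) (hx : 0 < x) :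
    uIG (a + 1) x = x ^ a * exp (-x) + a * uIG a x := by
  have hint : IntegrableOn (fun t => t ^ a * exp (-t)) (Ioi x) := by
    simpa using integrableOn_rpow_mul_exp_neg_Ioi (a := a + 1) (by linarith) hx.le
  have hint' := (integrableOn_rpow_mul_exp_neg_Ioi ha hx.le).const_mul a
  have hcont : ContinuousWithinAt (fun t => -(t ^ a * exp (-t))) (Ici x) x :=
    ((continuousAt_rpow_const x a (Or.inl hx.ne')).mul (by fun_prop)).neg.continuousWithinAt
  have hderiv : ∀ t ∈ Ioi x, HasDerivAt (fun t => -(t ^ a * exp (-t)))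
      (t ^ a * exp (-t) - a * (t ^ (a - 1) * exp (-t))) t := fun t ht => by
    have hpow : HasDerivAt (fun t => t ^ a) (a * t ^ (a - 1)) t :=
      hasDerivAt_rpow_const (Or.inl (hx.trans ht).ne')
    exact ((hpow.mul (hasDerivAt_neg t).exp).neg).congr_deriv (by ring)
  have hlim : Tendsto (fun t => -(t ^ a * exp (-t))) atTop (𝓝 0) := by
    simpa using (tendsto_rpow_mul_exp_neg_mul_atTop_nhds_zero a 1 one_pos).neg
  have h := integral_Ioi_of_hasDerivAt_of_tendsto hcont hderiv (hint.sub hint') hlim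
  rw [integral_sub hint hint', integral_const_mul] at h
  simp only [uIG, add_sub_cancel_right]
  linarith

lemma mul_uIG_lt_uIG_add_one (ha : 0 < a) (hx : 0 < x)
    (h : ∫ t in x..x + 1, t ^ a * exp (-t) < x ^ a * exp (-x)) :
    a * uIG a x < uIG (a + 1) (x + 1) := by
  have hsplit :=
    uIG_eq_intervalIntegral_add (a := a + 1) (by linarith) hx.le (by linarith : x ≤ x + 1)
  rw [add_sub_cancel_right, uIG_add_one ha hx] at hsplit
  linarith

lemma uIG_div_Gamma_lt_of_mul_lt (ha : 0 < a) (h : a * uIG a x < uIG (a + 1) y) :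
    uIG a x / Gamma a < uIG (a + 1) y / Gamma (a + 1) := by
  rw [Gamma_add_one ha.ne', ← mul_div_mul_left (uIG a x) (Gamma a) ha.ne']
  exact div_lt_div_of_pos_right h (mul_pos ha (Gamma_pos_of_pos ha))

end

lemma add_rpow_mul_exp_neg_le {s x u : ℝ} (hs : 0 ≤ s) (hx : 1 ≤ x) (hu₀ : 0 ≤ u)
    (hu₁ : u ≤ 1) :
    (x + u) ^ (x + s) * exp (-(x + u)) ≤
      x ^ (x + s) * exp (-x) * exp (s / x * u - (x - 1) / (2 * x ^ 2) * u ^ 2) := by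
  have hx₀ : 0 < x := by linarith
  have hv : 0 < 1 + u / x := by positivity
  have hexponent : (x + s) * log (1 + u / x) - u ≤ s / x * u - (x - 1) / (2 * x ^ 2) * u ^ 2 := by
    have hlog := mul_le_mul_of_nonneg_left (log_one_add_le (div_nonneg hu₀ hx₀.le))
      (by linarith : 0 ≤ x + s)
    have hgap : s / x * u - (x - 1) / (2 * x ^ 2) * u ^ 2
        - ((x + s) * (u / x - (u / x) ^ 2 / 2 + (u / x) ^ 3 / 3) - u)
        = u ^ 2 * (x + s * (3 * x - 2) + 2 * (x + s) * (1 - u)) / (6 * x ^ 3) := by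
      field_simp
      ring
    have : 0 ≤ x + s * (3 * x - 2) + 2 * (x + s) * (1 - u) := by nlinarith
    have : 0 ≤ u ^ 2 * (x + s * (3 * x - 2) + 2 * (x + s) * (1 - u)) / (6 * x ^ 3) := by
      positivity
    linarith
  have hsplit : (x + u) ^ (x + s) = x ^ (x + s) * (1 + u / x) ^ (x + s) := by
    rw [← mul_rpow hx₀.le hv.le, mul_add, mul_one, mul_div_cancel₀ _ hx₀.ne']
  calc (x + u) ^ (x + s) * exp (-(x + u))
      = x ^ (x + s) * exp (-x) * exp ((x + s) * log (1 + u / x) - u) := by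
        rw [hsplit, rpow_def_of_pos hv, mul_comm (log _), neg_add, exp_add, sub_eq_add_neg,
          exp_add]
        ring
    _ ≤ _ := by gcongr

lemma integral_rpow_mul_exp_neg_lt {s x : ℝ} (hs : 0 ≤ s) (hx₀ : 0 < x)
    (hx : 1 ≤ (1 / 6 - s / 2) * x) :
    ∫ t in x..x + 1, t ^ (x + s) * exp (-t) < x ^ (x + s) * exp (-x) := by
  have hs₃ : s < 1 / 3 := by nlinarith
  have hx₆ : 6 ≤ x := by nlinarith
  set C := x ^ (x + s) * exp (-x)
  set α := s / x
  set β := (x - 1) / (2 * x ^ 2)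
  have hα : 0 ≤ α := by positivity
  have hβ : 0 ≤ β := div_nonneg (by linarith) (by positivity)
  have hαβ : (α + β) * x ≤ 5 / 6 := by
    have : (α + β) * x = s + (x - 1) / (2 * x) := by
      simp only [α, β]
      field_simp
    have : (x - 1) / (2 * x) ≤ 1 / 2 := by
      rw [div_le_iff₀ (by positivity)]
      linarith
    linarith
  have hpt : ∀ u ∈ Icc (0:ℝ) 1, (x + u) ^ (x + s) * exp (-(x + u))
      ≤ C * (1 + α * u + ((α + β) ^ 2 - β) * u ^ 2) := by
    rintro u ⟨hu₀, hu₁⟩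
    calc (x + u) ^ (x + s) * exp (-(x + u)) ≤ C * exp (α * u - β * u ^ 2) :=
          add_rpow_mul_exp_neg_le hs (by linarith) hu₀ hu₁
      _ ≤ C * (1 + α * u + ((α + β) ^ 2 - β) * u ^ 2) := by
          gcongr
          exact exp_mul_sub_mul_sq_le hα hβ (by nlinarith) hu₀ hu₁
  have hneg : α / 2 + ((α + β) ^ 2 - β) / 3 < 0 := by
    -- `(3 s x - x + 1) / 6 = 1/6 - (1/6 - s/2) x ≤ -5/6` beats `((α + β) x)² / 3 ≤ 25/108`
    have h : x ^ 2 * (α / 2 + ((α + β) ^ 2 - β) / 3)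
        = (3 * s * x - x + 1) / 6 + ((α + β) * x) ^ 2 / 3 := by
      simp only [α, β]
      field_simp
      ring
    have : 0 ≤ (α + β) * x := by positivity
    have : x ^ 2 * (α / 2 + ((α + β) ^ 2 - β) / 3) < 0 := by rw [h]; nlinarith
    exact neg_of_mul_neg_right this (sq_nonneg x)
  have hcont : Continuous fun u => (x + u) ^ (x + s) * exp (-(x + u)) := by
    fun_prop (disch := linarith)
  calc ∫ t in x..x + 1, t ^ (x + s) * exp (-t)
      = ∫ u in (0:ℝ)..1, (x + u) ^ (x + s) * exp (-(x + u)) := by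
        rw [intervalIntegral.integral_comp_add_left (fun t => t ^ (x + s) * exp (-t)), add_zero]
    _ ≤ ∫ u in (0:ℝ)..1, C * (1 + α * u + ((α + β) ^ 2 - β) * u ^ 2) :=
        intervalIntegral.integral_mono_on zero_le_one (hcont.intervalIntegrable _ _)
          ((by fun_prop : Continuous _).intervalIntegrable _ _) hpt
    _ = C * (1 + α / 2 + ((α + β) ^ 2 - β) / 3) := by
        rw [intervalIntegral.integral_const_mul, integral_one_add_mul_add_mul_sq]
    _ < C := by
        have : 0 < C := by positivity
        nlinarith

lemma exists_uIG_div_Gamma_lt_add_one {c : ℝ} (hc₁ : -1 / 3 < c) (hc₂ : c ≤ 0) :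
    ∃ a ∈ Ioi (-c), uIG a (a + c) / Gamma a < uIG (a + 1) (a + 1 + c) / Gamma (a + 1) := by
  have h3c : 0 < 1 + 3 * c := by linarith
  set x := 6 / (1 + 3 * c) with hx_def
  have hx₀ : 0 < x := by positivity
  have hx : 1 ≤ (1 / 6 - -c / 2) * x := by
    rw [hx_def, show 1 / 6 - -c / 2 = (1 + 3 * c) / 6 by ring, div_mul_div_comm, mul_comm,
      div_self (by positivity)]
  have ha : 0 < x - c := by linarith
  have hint := integral_rpow_mul_exp_neg_lt (by linarith) hx₀ hx
  rw [← sub_eq_add_neg] at hint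
  refine ⟨x - c, by rw [mem_Ioi]; linarith, ?_⟩
  rw [sub_add_cancel, show x - c + 1 + c = x + 1 by ring]
  exact uIG_div_Gamma_lt_of_mul_lt ha (mul_uIG_lt_uIG_add_one ha hx₀ hint)

lemma exists_lt_uIG_div_Gamma {c : ℝ} (hc₁ : -1 / 3 < c) (hc₂ : c < 0) :
    ∃ a ∈ Ioi (-c), a ≤ 1 ∧ uIG 1 (1 + c) / Gamma 1 < uIG a (a + c) / Gamma a := by
  set δ := exp (2 / c)
  have hδ₀ : 0 < δ := exp_pos _
  have hδ : δ < 0.37 := by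
    have : δ ≤ exp (-1) := exp_le_exp.2 (by rw [div_le_iff_of_neg hc₂]; linarith)
    linarith [exp_neg_one_lt_d9]
  have ha : 0 < δ - c := by linarith
  have hpow : δ ^ (δ - c) ≤ exp (-2) := by
    calc δ ^ (δ - c) ≤ δ ^ (-c) := rpow_le_rpow_of_exponent_ge hδ₀ (by linarith) (by linarith)
      _ = exp (-2) := by
        rw [← exp_mul]
        congr 1
        field_simp [hc₂.ne]
  have hlower : 1 - exp (-1) ≤ uIG (δ - c) δ / Gamma (δ - c) := by
    have := one_sub_uIG_div_Gamma_le ha hδ₀.le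
    have : exp 1 * exp (-2) = exp (-1) := by rw [← exp_add]; norm_num
    nlinarith [exp_pos 1]
  have hupper : uIG 1 (1 + c) / Gamma 1 < 3 / 5 := by
    rw [uIG_one_left, Gamma_one, div_one]
    have h₁ : exp (-(1 + c)) ≤ exp (-(2 / 3)) := exp_le_exp.2 (by linarith)
    have h₂ : exp (-(2 / 3)) < 3 / 5 := by
      rw [exp_neg, inv_lt_comm₀ (exp_pos _) (by norm_num)]
      linarith [add_one_lt_exp (x := 2 / 3) (by norm_num)]
    linarith
  refine ⟨δ - c, by rw [mem_Ioi]; linarith, by linarith, ?_⟩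
  rw [sub_add_cancel]
  linarith [exp_neg_one_lt_d9]

theorem stmt2 (c : ℝ) (hc1 : -1/3 < c) (hc2 : c < 0) :
    ¬ MonotoneOn (fun a => uIG a (a + c) / Real.Gamma a) (Set.Ioi (-c)) ∧
    ¬ AntitoneOn (fun a => uIG a (a + c) / Real.Gamma a) (Set.Ioi (-c)) := by
  constructor
  · intro hmono
    obtain ⟨a, ha, ha₁, hlt⟩ := exists_lt_uIG_div_Gamma hc1 hc2
    have h₁ : (1 : ℝ) ∈ Ioi (-c) := by rw [mem_Ioi]; linarith
    exact (hmono ha h₁ ha₁).not_gt hlt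
  · intro hanti
    obtain ⟨a, ha, hlt⟩ := exists_uIG_div_Gamma_lt_add_one hc1 hc2.le
    have ha₁ : a + 1 ∈ Ioi (-c) := by rw [mem_Ioi] at ha ⊢; linarith
    exact (hanti ha ha₁ (by linarith)).not_gt hlt
end

section
/- For all real a > 0, Γ(a, a)/Γ(a) < 1/2, i.e., P(X_a > a) < 1/2 where X_a has the gamma distribution with shape a and scale 1. -/
/-! The reflection `t ↦ a² / t` exchanges `(0, a)` and `(a, ∞)`. Pulling the integral over
`(a, ∞)` back to `(0, a)` multiplies the integrand at `τ` by `(a/τ)^(2a) · exp (τ - a²/τ)`,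
which for `x = a/τ > 1` is `exp (a (2 log x - (x - 1/x))) < 1` because `log x < sinh (log x)`.
Hence `Γ(a, a)` is smaller than the lower incomplete integral `γ(a, a) = Γ(a) - Γ(a, a)`. -/

open Real MeasureTheory Set Filter

theorem two_mul_log_lt_sub_inv {x : ℝ} (hx : 1 < x) : 2 * log x < x - x⁻¹ := by
  have h := self_lt_sinh_iff.mpr (log_pos hx)
  rw [sinh_eq, exp_log (by linarith), exp_neg, exp_log (by linarith)] at h
  linarith

theorem setIntegral_lt_setIntegral_of_forall_lt {α : Type*} [MeasurableSpace α] {μ : Measure α}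
    {s : Set α} {f g : α → ℝ} (hs : MeasurableSet s) (hμs : μ s ≠ 0)
    (hf : IntegrableOn f s μ) (hg : IntegrableOn g s μ) (hlt : ∀ x ∈ s, f x < g x) :
    ∫ x in s, f x ∂μ < ∫ x in s, g x ∂μ := by
  rw [← sub_pos, ← integral_sub hg hf, setIntegral_pos_iff_support_of_nonneg_ae
    ((ae_restrict_iff' hs).mpr (.of_forall fun x hx => sub_nonneg.mpr (hlt x hx).le)) (hg.sub hf)]
  refine pos_iff_ne_zero.mpr fun h0 => hμs (measure_mono_null (fun x hx => ?_) h0)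
  exact ⟨(sub_pos.mpr (hlt x hx)).ne', hx⟩

section Reflection

variable {E : Type*} [NormedAddCommGroup E] [NormedSpace ℝ E] {c : ℝ}

theorem image_sq_div_Ioo (hc : 0 < c) : (fun τ => c ^ 2 / τ) '' Ioo 0 c = Ioi c := by
  ext t
  constructor
  · rintro ⟨τ, ⟨hτ0, hτc⟩, rfl⟩
    rw [mem_Ioi, lt_div_iff₀ hτ0]
    nlinarith
  · intro (ht : c < t)
    have ht0 : 0 < t := hc.trans ht
    refine ⟨c ^ 2 / t, ⟨by positivity, ?_⟩, by field_simp⟩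
    rw [div_lt_iff₀ ht0]
    nlinarith

theorem hasDerivAt_sq_div {τ : ℝ} (hτ : τ ≠ 0) :
    HasDerivAt (fun τ => c ^ 2 / τ) (-(c ^ 2 / τ ^ 2)) τ := by
  simpa [div_eq_mul_inv, neg_div] using (hasDerivAt_inv hτ).const_mul (c ^ 2)

theorem injective_sq_div (hc : c ≠ 0) : Function.Injective fun τ : ℝ => c ^ 2 / τ :=
  fun _ _ h => inv_injective (mul_left_cancel₀ (pow_ne_zero 2 hc) h)

theorem abs_neg_sq_div_sq (τ : ℝ) : |-(c ^ 2 / τ ^ 2)| = c ^ 2 / τ ^ 2 := by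
  rw [abs_neg, abs_of_nonneg (by positivity)]

theorem integrableOn_Ioi_iff_integrableOn_Ioo_sq_div (hc : 0 < c) (g : ℝ → E) :
    IntegrableOn g (Ioi c) ↔ IntegrableOn (fun τ => (c ^ 2 / τ ^ 2) • g (c ^ 2 / τ)) (Ioo 0 c) := by
  simp_rw [← image_sq_div_Ioo hc, integrableOn_image_iff_integrableOn_abs_deriv_smul
    measurableSet_Ioo (fun τ hτ => (hasDerivAt_sq_div hτ.1.ne').hasDerivWithinAt)
    (injective_sq_div hc.ne').injOn g, abs_neg_sq_div_sq]

theorem integral_Ioi_eq_integral_Ioo_sq_div (hc : 0 < c) (g : ℝ → E) :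
    ∫ t in Ioi c, g t = ∫ τ in Ioo 0 c, (c ^ 2 / τ ^ 2) • g (c ^ 2 / τ) := by
  simp_rw [← image_sq_div_Ioo hc, integral_image_eq_integral_abs_deriv_smul
    measurableSet_Ioo (fun τ hτ => (hasDerivAt_sq_div hτ.1.ne').hasDerivWithinAt)
    (injective_sq_div hc.ne').injOn g, abs_neg_sq_div_sq]

end Reflection

theorem sq_div_sq_mul_rpow_mul_exp_neg_sq_div_lt {a τ : ℝ} (hτ : 0 < τ) (hτa : τ < a) :
    a ^ 2 / τ ^ 2 * ((a ^ 2 / τ) ^ (a - 1) * exp (-(a ^ 2 / τ))) < τ ^ (a - 1) * exp (-τ) := by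
  have ha : 0 < a := hτ.trans hτa
  have hlog := two_mul_log_lt_sub_inv ((one_lt_div hτ).mpr hτa)
  rw [log_div ha.ne' hτ.ne', inv_div] at hlog
  have hkey : 2 * a * (log a - log τ) < a ^ 2 / τ - τ :=
    calc 2 * a * (log a - log τ) = a * (2 * (log a - log τ)) := by ring
      _ < a * (a / τ - τ / a) := by gcongr
      _ = a ^ 2 / τ - τ := by field_simp
  rw [← log_lt_log_iff (by positivity) (by positivity), log_mul (by positivity) (by positivity),
    log_mul (by positivity) (by positivity), log_mul (by positivity) (by positivity),
    log_rpow (by positivity), log_rpow hτ, log_exp, log_exp, log_div (by positivity) (by positivity),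
    log_div (by positivity) hτ.ne', log_pow, log_pow]
  push_cast
  linarith

theorem integrableOn_rpow_mul_exp_neg {a : ℝ} (ha : 0 < a) :
    IntegrableOn (fun t => t ^ (a - 1) * exp (-t)) (Ioi 0) :=
  (GammaIntegral_convergent ha).congr_fun (fun _ _ => mul_comm _ _) measurableSet_Ioi

theorem Gamma_eq_integral_Ioo_add_uIG {a : ℝ} (ha : 0 < a) :
    Gamma a = (∫ t in Ioo 0 a, t ^ (a - 1) * exp (-t)) + uIG a a := by
  have hint := integrableOn_rpow_mul_exp_neg ha
  rw [Gamma_eq_integral ha, ← integral_Ioc_eq_integral_Ioo, uIG, ← setIntegral_union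
    (Ioc_disjoint_Ioi le_rfl) measurableSet_Ioi (hint.mono_set Ioc_subset_Ioi_self)
    (hint.mono_set (Ioi_subset_Ioi ha.le)), Ioc_union_Ioi_eq_Ioi ha.le]
  exact setIntegral_congr_fun measurableSet_Ioi fun _ _ => mul_comm _ _

theorem uIG_lt_integral_Ioo {a : ℝ} (ha : 0 < a) :
    uIG a a < ∫ t in Ioo 0 a, t ^ (a - 1) * exp (-t) := by
  have hint := integrableOn_rpow_mul_exp_neg ha
  rw [uIG, integral_Ioi_eq_integral_Ioo_sq_div ha]
  refine setIntegral_lt_setIntegral_of_forall_lt measurableSet_Ioo (by simp [ha])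
    ((integrableOn_Ioi_iff_integrableOn_Ioo_sq_div ha _).mp (hint.mono_set (Ioi_subset_Ioi ha.le)))
    (hint.mono_set Ioo_subset_Ioi_self) fun τ hτ => ?_
  exact sq_div_sq_mul_rpow_mul_exp_neg_sq_div_lt hτ.1 hτ.2

theorem stmt3 (a : ℝ) (ha : 0 < a) : uIG a a / Real.Gamma a < 1/2 := by
  rw [div_lt_iff₀ (Gamma_pos_of_pos ha), Gamma_eq_integral_Ioo_add_uIG ha]
  linarith [uIG_lt_integral_Ioo ha]
end

section
/- For all real a > 1/3, Γ(a, a - 1/3)/Γ(a) > 1/2, i.e., P(X_a > a - 1/3) > 1/2 where X_a has the gamma distribution with shape a and scale 1. -/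
/-! Substituting `t = a y³` turns the Gamma integrand into `3 aᵃ y^(3a-1) e^(-a y³)`, whose mode `m`
satisfies `a m³ = a - 1/3`; so the claim is that this density puts more than half of its mass to
the right of its mode. The inequality `log ((1 + u) / (1 - u)) ≥ 2u + 2u³/3` shows that the density
is skewed to the right: its value at `m + x` dominates its value at `m - x` for `0 ≤ x < m`. Hence
the mass on `(0, m)` is at most the mass on `(m, 2m)`, which is strictly less than the mass on
`(m, ∞)`. -/

open Real MeasureTheory Set Filter

lemma two_mul_add_le_log_sub_log {u : ℝ} (hu₀ : 0 ≤ u) (hu₁ : u < 1) :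
    2 * u + 2 / 3 * u ^ 3 ≤ log (1 + u) - log (1 - u) := by
  have h := sum_le_hasSum (Finset.range 2) (fun k _ => by positivity)
    (hasSum_log_sub_log_of_abs_lt_one (abs_lt.2 ⟨by linarith, hu₁⟩))
  norm_num [Finset.sum_range_succ] at h
  linarith

lemma exists_pos_mul_pow_three_eq {b c : ℝ} (hb : 0 < b) (hc : 0 < c) :
    ∃ m, 0 < m ∧ b * m ^ 3 = c := by
  refine ⟨(c / b) ^ ((3 : ℕ)⁻¹ : ℝ), rpow_pos_of_pos (div_pos hc hb) _, ?_⟩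
  rw [rpow_inv_natCast_pow (div_pos hc hb).le three_ne_zero]
  field_simp

lemma hasDerivAt_const_mul_pow_three (a y : ℝ) :
    HasDerivAt (fun y => a * y ^ 3) (3 * a * y ^ 2) y := by
  simpa [mul_comm, mul_assoc, mul_left_comm] using (hasDerivAt_pow 3 y).const_mul a

lemma intervalIntegral_comp_const_mul_pow_three {a : ℝ} (ha : 0 ≤ a) (p q : ℝ) (g : ℝ → ℝ) :
    ∫ y in p..q, g (a * y ^ 3) * (3 * a * y ^ 2) = ∫ t in a * p ^ 3..a * q ^ 3, g t :=
  intervalIntegral.integral_comp_mul_deriv_of_deriv_nonneg (by fun_prop)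
    (fun y _ => hasDerivAt_const_mul_pow_three a y) (fun y _ => by positivity)

lemma intervalIntegrable_comp_const_mul_pow_three_iff {a : ℝ} (ha : 0 ≤ a) (p q : ℝ) (g : ℝ → ℝ) :
    IntervalIntegrable (fun y => g (a * y ^ 3) * (3 * a * y ^ 2)) volume p q ↔
      IntervalIntegrable g volume (a * p ^ 3) (a * q ^ 3) :=
  intervalIntegral.integrable_comp_mul_deriv_iff_of_deriv_nonneg (by fun_prop)
    (fun y _ => hasDerivAt_const_mul_pow_three a y) (fun y _ => by positivity)

noncomputable def gammaIntegrand (a t : ℝ) : ℝ := t ^ (a - 1) * exp (-t)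

noncomputable def cubeGammaDensity (a y : ℝ) : ℝ := y ^ (3 * a - 1) * exp (-(a * y ^ 3))

lemma uIG_eq_integral_gammaIntegrand (a x : ℝ) : uIG a x = ∫ t in Ioi x, gammaIntegrand a t :=
  rfl

lemma Gamma_eq_integral_gammaIntegrand {a : ℝ} (ha : 0 < a) :
    Gamma a = ∫ t in Ioi 0, gammaIntegrand a t := by
  rw [Gamma_eq_integral ha]
  exact setIntegral_congr_fun measurableSet_Ioi fun _ _ => mul_comm _ _

lemma integrableOn_gammaIntegrand_Ioi {a : ℝ} (ha : 0 < a) :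
    IntegrableOn (gammaIntegrand a) (Ioi 0) :=
  (GammaIntegral_convergent ha).congr_fun (fun _ _ => mul_comm _ _) measurableSet_Ioi

lemma gammaIntegrand_pos (a : ℝ) {t : ℝ} (ht : 0 < t) : 0 < gammaIntegrand a t := by
  unfold gammaIntegrand
  positivity

lemma uIG_pos {a x : ℝ} (ha : 0 < a) (hx : 0 ≤ x) : 0 < uIG a x := by
  have hpos : ∀ t ∈ Ioi x, 0 < gammaIntegrand a t := fun t ht =>
    gammaIntegrand_pos a (hx.trans_lt ht)
  have hsupp : Ioi x ⊆ Function.support (gammaIntegrand a) := fun t ht => (hpos t ht).ne'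
  rw [uIG_eq_integral_gammaIntegrand, setIntegral_pos_iff_support_of_nonneg_ae
    ((ae_restrict_iff' measurableSet_Ioi).2 (.of_forall fun t ht => (hpos t ht).le))
    ((integrableOn_gammaIntegrand_Ioi ha).mono_set (Ioi_subset_Ioi hx)),
    inter_eq_right.2 hsupp, volume_Ioi]
  exact ENNReal.zero_lt_top

lemma cubeGammaDensity_le_reflect {a m y : ℝ} (ha : 0 < a) (hm : 0 < m)
    (hmode : 3 * a * m ^ 3 = 3 * a - 1) (hy : 0 < y) (hym : y ≤ m) :
    cubeGammaDensity a y ≤ cubeGammaDensity a (2 * m - y) := by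
  have hy' : 0 < 2 * m - y := by linarith
  have hlog := two_mul_add_le_log_sub_log (u := 1 - y / m)
    (by rw [sub_nonneg, div_le_one hm]; exact hym) (by have := div_pos hy hm; linarith)
  have h1 : 1 + (1 - y / m) = (2 * m - y) / m := by field_simp; ring
  have h2 : 1 - (1 - y / m) = y / m := by ring
  rw [h1, h2, log_div hy'.ne' hm.ne', log_div hy.ne' hm.ne'] at hlog
  have halg : (3 * a - 1) * (2 * (1 - y / m) + 2 / 3 * (1 - y / m) ^ 3)
      = a * ((2 * m - y) ^ 3 - y ^ 3) := by
    rw [← hmode]; field_simp; ring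
  unfold cubeGammaDensity
  rw [rpow_def_of_pos hy, rpow_def_of_pos hy', ← exp_add, ← exp_add, exp_le_exp]
  nlinarith [mul_le_mul_of_nonneg_left hlog (by nlinarith [pow_pos hm 3] : 0 ≤ 3 * a - 1)]

lemma gammaIntegrand_mul_cube_deriv {a y : ℝ} (ha : 0 < a) (hy : 0 < y) :
    gammaIntegrand a (a * y ^ 3) * (3 * a * y ^ 2) = 3 * a ^ a * cubeGammaDensity a y := by
  unfold gammaIntegrand cubeGammaDensity
  rw [mul_rpow ha.le (by positivity), ← rpow_natCast y 3, ← rpow_mul hy.le,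
    ← rpow_natCast y 2, show 3 * a - 1 = (3 : ℕ) * (a - 1) + (2 : ℕ) by push_cast; ring,
    rpow_add hy, show a ^ a = a ^ (a - 1) * a by rw [← rpow_add_one ha.ne']; ring_nf]
  ring

lemma intervalIntegrable_gammaIntegrand {a x : ℝ} (ha : 0 < a) (hx : 0 ≤ x) :
    IntervalIntegrable (gammaIntegrand a) volume 0 x :=
  (intervalIntegrable_iff_integrableOn_Ioc_of_le hx).2
    ((integrableOn_gammaIntegrand_Ioi ha).mono_set Ioc_subset_Ioi_self)

lemma intervalIntegral_gammaIntegrand_left_le_right {a : ℝ} (ha : 1 / 3 < a) :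
    ∫ t in 0..a - 1 / 3, gammaIntegrand a t ≤
      ∫ t in a - 1 / 3..8 * (a - 1 / 3), gammaIntegrand a t := by
  have ha₀ : 0 < a := by linarith
  obtain ⟨m, hm, hmode⟩ :=
    exists_pos_mul_pow_three_eq (by linarith : 0 < 3 * a) (by linarith : 0 < 3 * a - 1)
  have hm₀ : a * 0 ^ 3 = 0 := by ring
  have hm₁ : a * m ^ 3 = a - 1 / 3 := by linarith
  have hm₂ : a * (2 * m) ^ 3 = 8 * (a - 1 / 3) := by linear_combination 8 * hm₁
  set Φ : ℝ → ℝ := fun y => gammaIntegrand a (a * y ^ 3) * (3 * a * y ^ 2) with hΦ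
  have hint : IntervalIntegrable Φ volume 0 (2 * m) := by
    rw [intervalIntegrable_comp_const_mul_pow_three_iff ha₀.le, hm₀, hm₂]
    exact intervalIntegrable_gammaIntegrand ha₀ (by linarith)
  have hle : ∀ y ∈ Ioo 0 m, Φ y ≤ Φ (2 * m - y) := by
    rintro y ⟨hy, hym⟩
    simp only [hΦ]
    rw [gammaIntegrand_mul_cube_deriv ha₀ hy, gammaIntegrand_mul_cube_deriv ha₀ (by linarith)]
    gcongr
    exact cubeGammaDensity_le_reflect ha₀ hm hmode hy hym.le
  calc ∫ t in 0..a - 1 / 3, gammaIntegrand a t = ∫ y in 0..m, Φ y := by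
        rw [intervalIntegral_comp_const_mul_pow_three ha₀.le, hm₀, hm₁]
    _ ≤ ∫ y in 0..m, Φ (2 * m - y) := by
        have hm_mem : m ∈ uIcc 0 (2 * m) := by
          rw [uIcc_of_le (by linarith)]
          constructor <;> linarith
        refine intervalIntegral.integral_mono_on_of_le_Ioo hm.le
          (hint.mono_set (uIcc_subset_uIcc_left hm_mem)) ?_ hle
        simpa [two_mul] using
          ((hint.mono_set (uIcc_subset_uIcc_right hm_mem)).comp_sub_left (2 * m)).symm
    _ = ∫ y in m..2 * m, Φ y := by
        rw [intervalIntegral.integral_comp_sub_left]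
        ring_nf
    _ = ∫ t in a - 1 / 3..8 * (a - 1 / 3), gammaIntegrand a t := by
        rw [intervalIntegral_comp_const_mul_pow_three ha₀.le, hm₁, hm₂]

theorem stmt4 (a : ℝ) (ha : 1/3 < a) : 1/2 < uIG a (a - 1/3) / Real.Gamma a := by
  have ha₀ : 0 < a := by linarith
  have hc : 0 < a - 1 / 3 := by linarith
  have hI := integrableOn_gammaIntegrand_Ioi ha₀
  have hbelow : Gamma a - uIG a (a - 1 / 3) = ∫ t in 0..a - 1 / 3, gammaIntegrand a t := by
    rw [Gamma_eq_integral_gammaIntegrand ha₀, uIG_eq_integral_gammaIntegrand]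
    exact intervalIntegral.integral_Ioi_sub_Ioi hI hc.le
  have hmiddle : uIG a (a - 1 / 3) - uIG a (8 * (a - 1 / 3)) =
      ∫ t in a - 1 / 3..8 * (a - 1 / 3), gammaIntegrand a t :=
    intervalIntegral.integral_Ioi_sub_Ioi (hI.mono_set (Ioi_subset_Ioi hc.le)) (by linarith)
  have htail := uIG_pos ha₀ (by linarith : 0 ≤ 8 * (a - 1 / 3))
  have hskew := intervalIntegral_gammaIntegrand_left_le_right ha
  rw [lt_div_iff₀ (Gamma_pos_of_pos ha₀)]
  linarith
end

section
/- For all distinct positive reals x, y: L(x,y)^2 < xy + (1/3)(L(x,y) - min(x,y))(max(x,y) - L(x,y)), where L is the logarithmic mean. Moreover the constant 1/3 is optimal: for any constant k < 1/3 there exist 0 < x < y with L(x,y)^2 ≥ xy + k(L(x,y)-x)(y-L(x,y)). -/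
open Real MeasureTheory Set Filter

noncomputable def Lmean (x y : ℝ) : ℝ := (y - x) / (Real.log y - Real.log x)

section Aux

lemma pos_of_deriv_pos (a : ℝ) (g : ℝ → ℝ) (hc : ContinuousOn g (Ici a))
    (hd : ∀ t ∈ Ioi a, 0 < deriv g t) (h0 : g a = 0) : ∀ t ∈ Ioi a, 0 < g t := by
  intro t ht
  have hm : StrictMonoOn g (Ici a) :=
    strictMonoOn_of_deriv_pos (convex_Ici a) hc (by rwa [interior_Ici])
  have := hm (self_mem_Ici) (mem_Ici.2 (le_of_lt ht)) ht
  simpa [h0] using this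

lemma log_lb : ∀ e : ℝ, 0 < e → e - e^2/2 < Real.log (1+e) := by
  have key := pos_of_deriv_pos 0 (fun t => Real.log (1+t) - (t - t^2/2)) ?_ ?_ (by norm_num)
  · intro e he; have := key e he; linarith
  · apply ContinuousOn.sub
    · apply ContinuousOn.log (by fun_prop)
      intro x hx; simp only [mem_Ici] at hx; positivity
    · fun_prop
  · intro t ht
    simp only [mem_Ioi] at ht
    have h1 : (0:ℝ) < 1 + t := by linarith
    have hd : HasDerivAt (fun t : ℝ => Real.log (1+t) - (t - t^2/2))
        (1/(1+t) - (1 - 2*t/2)) t := by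
      have hlog : HasDerivAt (fun t : ℝ => Real.log (1+t)) (1/(1+t)) t := by
        simpa using (((hasDerivAt_id t).const_add 1).log (by simpa using h1.ne'))
      have hpoly : HasDerivAt (fun t : ℝ => t - t^2/2) (1 - 2*t/2) t := by
        simpa [Pi.sub_def] using (hasDerivAt_id t).sub ((hasDerivAt_pow 2 t).div_const 2)
      exact hlog.sub hpoly
    rw [hd.deriv]
    rw [div_sub' (by positivity : (1+t) ≠ 0)]
    apply div_pos _ h1
    nlinarith

lemma log_ub : ∀ e : ℝ, 0 < e → Real.log (1+e) < e - e^2/2 + e^3/3 := by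
  have key := pos_of_deriv_pos 0 (fun t => (t - t^2/2 + t^3/3) - Real.log (1+t)) ?_ ?_ (by norm_num)
  · intro e he; have := key e he; linarith
  · apply ContinuousOn.sub
    · fun_prop
    · apply ContinuousOn.log (by fun_prop)
      intro x hx; simp only [mem_Ici] at hx; positivity
  · intro t ht
    simp only [mem_Ioi] at ht
    have h1 : (0:ℝ) < 1 + t := by linarith
    have hd : HasDerivAt (fun t : ℝ => (t - t^2/2 + t^3/3) - Real.log (1+t))
        ((1 - 2*t/2 + 3*t^2/3) - 1/(1+t)) t := by
      have hlog : HasDerivAt (fun t : ℝ => Real.log (1+t)) (1/(1+t)) t := by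
        simpa using (((hasDerivAt_id t).const_add 1).log (by simpa using h1.ne'))
      have hpoly : HasDerivAt (fun t : ℝ => t - t^2/2 + t^3/3) (1 - 2*t/2 + 3*t^2/3) t := by
        simpa [Pi.add_def, Pi.sub_def] using ((hasDerivAt_id t).sub ((hasDerivAt_pow 2 t).div_const 2)).add
          ((hasDerivAt_pow 3 t).div_const 3)
      exact hpoly.sub hlog
    rw [hd.deriv, sub_div' (by positivity : (1+t) ≠ 0)]
    apply div_pos _ h1
    nlinarith [pow_pos ht 3]

lemma contOn_log : ContinuousOn Real.log (Ici (1:ℝ)) := by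
  apply ContinuousOn.log (by fun_prop)
  intro x hx; simp only [mem_Ici] at hx; positivity

lemma f2_pos : ∀ t : ℝ, 1 < t → 0 < 2*Real.log t - 3 + 4/t - 1/t^2 := by
  have key := pos_of_deriv_pos 1 (fun t => 2*Real.log t - 3 + 4/t - 1/t^2) ?_ ?_ (by norm_num)
  · intro t ht; exact key t ht
  · have hne : ∀ x ∈ Ici (1:ℝ), x ≠ 0 := fun x hx => by simp only [mem_Ici] at hx; positivity
    have hne2 : ∀ x ∈ Ici (1:ℝ), x^2 ≠ 0 := fun x hx => by simp only [mem_Ici] at hx; positivity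
    exact (((continuousOn_const.mul contOn_log).sub continuousOn_const).add
      (continuousOn_const.div (by fun_prop) hne)).sub
      (continuousOn_const.div (by fun_prop) hne2)
  · intro t ht
    simp only [mem_Ioi] at ht
    have h0 : (0:ℝ) < t := by linarith
    have hd : HasDerivAt (fun t : ℝ => 2*Real.log t - 3 + 4/t - 1/t^2)
        (2*(1/t) + (-(4/t^2)) - (-(2*t/(t^2)^2))) t := by
      have hlog : HasDerivAt Real.log (1/t) t := by
        simpa [one_div] using Real.hasDerivAt_log h0.ne'
      have hinv : HasDerivAt (fun t:ℝ => 4/t) (-(4/t^2)) t := by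
        simpa [div_eq_mul_inv] using (hasDerivAt_inv h0.ne').const_mul 4
      have hinv2 : HasDerivAt (fun t:ℝ => 1/t^2) (-(2*t/(t^2)^2)) t := by
        have h2 : HasDerivAt (fun t:ℝ => t^2) (2*t) t := by simpa using hasDerivAt_pow 2 t
        have := h2.inv (by positivity)
        simpa [one_div, div_eq_mul_inv, Pi.inv_def] using this
      exact (((hlog.const_mul 2).sub_const 3).add hinv).sub hinv2
    rw [hd.deriv]
    have ht1 : 0 < t - 1 := by linarith
    have h1 : 0 < 2*(t-1)^2/t^3 := by positivity
    have : 2*(1/t) + (-(4/t^2)) - (-(2*t/(t^2)^2)) = 2*(t-1)^2/t^3 := by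
      field_simp; ring
    rw [this]; exact h1

lemma f1_pos : ∀ t : ℝ, 1 < t → 0 < (2*t+4)*Real.log t - 5*t + 4 + 1/t := by
  have key := pos_of_deriv_pos 1 (fun t => (2*t+4)*Real.log t - 5*t + 4 + 1/t) ?_ ?_ (by norm_num)
  · intro t ht; exact key t ht
  · apply ((((by fun_prop : ContinuousOn (fun t:ℝ => 2*t+4) (Ici 1)).mul contOn_log).sub
      (by fun_prop)).add continuousOn_const).add
    exact ContinuousOn.div continuousOn_const (by fun_prop)
      (fun x hx => by simp only [mem_Ici] at hx; positivity)
  · intro t ht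
    simp only [mem_Ioi] at ht
    have h0 : (0:ℝ) < t := by linarith
    have hd : HasDerivAt (fun t : ℝ => (2*t+4)*Real.log t - 5*t + 4 + 1/t)
        ((2*Real.log t + (2*t+4)*(1/t)) - 5 + 0 + (-(1/t^2))) t := by
      have hlog : HasDerivAt Real.log (1/t) t := by
        simpa [one_div] using Real.hasDerivAt_log h0.ne'
      have hlin : HasDerivAt (fun t:ℝ => 2*t+4) 2 t := by
        simpa using ((hasDerivAt_id t).const_mul 2).add_const 4
      have hinv : HasDerivAt (fun t:ℝ => 1/t) (-(1/t^2)) t := by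
        simpa [one_div] using (hasDerivAt_inv h0.ne')
      have h5 : HasDerivAt (fun t:ℝ => 5*t) 5 t := by
        simpa using (hasDerivAt_id t).const_mul 5
      have := ((hlin.mul hlog).sub h5).add_const 4
      simpa [Pi.add_def] using this.add hinv
    rw [hd.deriv]
    have key2 := f2_pos t ht
    have hx : (2*t+4)*(1/t) = 2 + 4/t := by field_simp
    rw [hx]; linarith

lemma polya : ∀ t : ℝ, 1 < t → 3*(t^2-1) < (t^2+4*t+1)*Real.log t := by
  have key := pos_of_deriv_pos 1 (fun t => (t^2+4*t+1)*Real.log t - 3*(t^2-1)) ?_ ?_ (by norm_num)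
  · intro t ht; have := key t ht; linarith
  · exact ((by fun_prop : ContinuousOn (fun t:ℝ => t^2+4*t+1) (Ici 1)).mul contOn_log).sub
      (by fun_prop)
  · intro t ht
    simp only [mem_Ioi] at ht
    have h0 : (0:ℝ) < t := by linarith
    have hd : HasDerivAt (fun t : ℝ => (t^2+4*t+1)*Real.log t - 3*(t^2-1))
        (((2*t+4)*Real.log t + (t^2+4*t+1)*(1/t)) - 3*(2*t)) t := by
      have hlog : HasDerivAt Real.log (1/t) t := by
        simpa [one_div] using Real.hasDerivAt_log h0.ne'
      have hq : HasDerivAt (fun t:ℝ => t^2+4*t+1) (2*t+4) t := by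
        have := ((hasDerivAt_pow 2 t).add ((hasDerivAt_id t).const_mul 4)).add_const 1
        simpa using this
      have hcube : HasDerivAt (fun t:ℝ => 3*(t^2-1)) (3*(2*t)) t := by
        have := ((hasDerivAt_pow 2 t).sub_const 1).const_mul 3
        simpa using this
      exact (hq.mul hlog).sub hcube
    rw [hd.deriv]
    have key1 := f1_pos t ht
    have he : (t^2+4*t+1)*(1/t) = t + 4 + 1/t := by field_simp
    have : (2*t+4)*Real.log t + (t^2+4*t+1)*(1/t) - 3*(2*t)
        = ((2*t+4)*Real.log t - 5*t + 4 + 1/t) + ((t^2+4*t+1)*(1/t) - (t+4+1/t)) := by ring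
    rw [this, he]; linarith

lemma main1 (x y : ℝ) (hx : 0 < x) (hxy : x < y) :
    Lmean x y ^ 2 < x*y + (1/3)*(Lmean x y - x)*(y - Lmean x y) := by
  have hy : 0 < y := hx.trans hxy
  set g := Real.sqrt (x*y) with hgdef
  have hg : g^2 = x*y := Real.sq_sqrt (by positivity)
  have hgpos : 0 < g := Real.sqrt_pos.2 (by positivity)
  set t := Real.sqrt (y/x) with htdef
  have ht2 : t^2 = y/x := Real.sq_sqrt (by positivity)
  have ht1 : 1 < t := by
    have : (1:ℝ) < y/x := (one_lt_div hx).2 hxy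
    nlinarith [Real.sqrt_nonneg (y/x)]
  have htpos : 0 < t := lt_trans one_pos ht1
  have hlt : 0 < Real.log t := Real.log_pos ht1
  have hxt2 : x * t^2 = y := by rw [ht2]; field_simp
  have hxt : x * t = g := by
    have h1 : (x*t)^2 = g^2 := by rw [hg]; nlinarith [hxt2]
    nlinarith [mul_pos hx htpos]
  have hlogdiff : Real.log y - Real.log x = 2 * Real.log t := by
    rw [← Real.log_div hy.ne' hx.ne', ← ht2, Real.log_pow]
    push_cast; ring
  have hLval : Lmean x y = x*(t^2-1)/(2*Real.log t) := by
    rw [Lmean, hlogdiff]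
    congr 1
    nlinarith [hxt2]
  have hLpos : 0 < Lmean x y := by
    rw [hLval]
    have : 0 < t^2 - 1 := by nlinarith
    positivity
  have hP := polya t ht1
  have hL : Lmean x y < (x + y + 4*g)/6 := by
    rw [hLval, div_lt_div_iff₀ (by positivity) (by norm_num)]
    have hxx : x + y + 4*g = x*(t^2+4*t+1) := by
      rw [← hxt2, ← hxt]; ring
    rw [hxx]
    nlinarith [mul_lt_mul_of_pos_left hP hx]
  have hs : 2*g < x + y := by
    have hsx : Real.sqrt x ^ 2 = x := Real.sq_sqrt hx.le
    have hsy : Real.sqrt y ^ 2 = y := Real.sq_sqrt hy.le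
    have hne : Real.sqrt x ≠ Real.sqrt y := by
      intro h; apply absurd (congrArg (·^2) h); simp [hsx, hsy]; exact hxy.ne
    have hgm : g = Real.sqrt x * Real.sqrt y := Real.sqrt_mul hx.le y
    nlinarith [sq_pos_of_ne_zero (sub_ne_zero.2 hne), sq_nonneg (Real.sqrt x - Real.sqrt y)]
  have hM : 0 < (x + y + 4*g)/6 := by positivity
  nlinarith [mul_pos (mul_pos hLpos (sub_pos.2 hL)) hM,
    mul_nonneg hLpos.le (sq_nonneg (x+y-2*g)),
    mul_pos (sub_pos.2 hL) (mul_pos hgpos hgpos), hg, hs, hgpos]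

set_option maxHeartbeats 1000000 in
lemma main2 (k : ℝ) (hk : k < 1/3) : ∃ x y : ℝ, 0 < x ∧ x < y ∧
    x * y + k * (Lmean x y - x) * (y - Lmean x y) ≤ Lmean x y ^ 2 := by
  set k' := max k 0 with hk'def
  have hk0 : 0 ≤ k' := le_max_right k 0
  have hkk : k ≤ k' := le_max_left k 0
  have hk1 : k' < 1/3 := max_lt hk (by norm_num)
  set e := min (1/4 : ℝ) ((1 - 3*k')/11) with hedef
  have he0 : 0 < e := lt_min (by norm_num) (by linarith)
  have he4 : e ≤ 1/4 := min_le_left _ _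
  have hem : 11*e ≤ 1 - 3*k' := by
    have := min_le_right (1/4 : ℝ) ((1 - 3*k')/11); linarith
  refine ⟨1, 1+e, one_pos, by linarith, ?_⟩
  set l := Real.log (1+e) with hldef
  have hl1 : e - e^2/2 < l := log_lb e he0
  have hl2 : l < e - e^2/2 + e^3/3 := log_ub e he0
  have hlpos : 0 < l := Real.log_pos (by linarith)
  have hLval : Lmean 1 (1+e) = e/l := by
    simp [Lmean, Real.log_one, hldef]
  set a := e - l with hadef
  have ha1 : e^2/2 - e^3/3 < a := by simp only [hadef]; linarith
  have ha2 : a < e^2/2 := by simp only [hadef]; linarith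
  have ha0 : 0 < a := by nlinarith
  have hHid : e^2 - (1+e)*l^2 - k'*(e-l)*((1+e)*l - e)
      = 2*a*e*(1+e) - e^3 - k'*a*e^2 - (1-k')*a^2*(1+e) := by
    simp only [hadef]; ring
  clear_value k' e l a
  -- key polynomial inequality
  have h1 : 0 ≤ (a - (e^2/2 - e^3/3)) * (2*e*(1+e)) :=
    mul_nonneg (by linarith) (by positivity)
  have h2 : 0 ≤ k' * ((e^2/2 - a) * e^2) :=
    mul_nonneg hk0 (mul_nonneg (by linarith) (by positivity))
  have h3 : 0 ≤ (1-k') * ((e^2/2 - a) * ((e^2/2 + a) * (1+e))) :=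
    mul_nonneg (by linarith) (mul_nonneg (by linarith)
      (mul_nonneg (by positivity) (by positivity)))
  have h4 : 0 ≤ k' * e^5 := mul_nonneg hk0 (by positivity)
  have h5 : 0 ≤ e^4 * ((1 - 3*k') - 11*e) := mul_nonneg (by positivity) (by linarith)
  have hT : 0 ≤ 2*a*e*(1+e) - e^3 - k'*a*e^2 - (1-k')*a^2*(1+e) := by
    linarith [h1, h2, h3, h4, h5]
  have hH : 0 ≤ e^2 - (1+e)*l^2 - k'*(e-l)*((1+e)*l - e) := by
    rw [hHid]; exact hT
  -- goal with k'
  have hyL : 0 ≤ (1+e) - Lmean 1 (1+e) := by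
    rw [hLval, sub_nonneg, div_le_iff₀ hlpos]
    nlinarith [mul_pos he0 he0, mul_pos (mul_pos he0 he0) he0]
  have hLx : 0 ≤ Lmean 1 (1+e) - 1 := by
    rw [hLval, sub_nonneg, le_div_iff₀ hlpos]
    nlinarith [mul_pos he0 he0, mul_pos (mul_pos he0 he0) he0]
  have hgoal' : (1+e) + k' * (Lmean 1 (1+e) - 1) * ((1+e) - Lmean 1 (1+e))
      ≤ Lmean 1 (1+e) ^ 2 := by
    rw [← sub_nonneg]
    have heq : Lmean 1 (1+e) ^ 2 - ((1+e) + k' * (Lmean 1 (1+e) - 1) * ((1+e) - Lmean 1 (1+e)))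
        = (e^2 - (1+e)*l^2 - k'*(e-l)*((1+e)*l - e)) / l^2 := by
      rw [hLval]; field_simp [hlpos.ne']; ring
    rw [heq]
    exact div_nonneg hH (sq_nonneg l)
  have hmono : k * (Lmean 1 (1+e) - 1) * ((1+e) - Lmean 1 (1+e))
      ≤ k' * (Lmean 1 (1+e) - 1) * ((1+e) - Lmean 1 (1+e)) := by
    apply mul_le_mul_of_nonneg_right _ hyL
    exact mul_le_mul_of_nonneg_right hkk hLx
  calc 1 * (1+e) + k * (Lmean 1 (1+e) - 1) * ((1+e) - Lmean 1 (1+e))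
      ≤ (1+e) + k' * (Lmean 1 (1+e) - 1) * ((1+e) - Lmean 1 (1+e)) := by linarith
    _ ≤ Lmean 1 (1+e) ^ 2 := hgoal'

end Aux

theorem stmt6 :
    (∀ x y : ℝ, 0 < x → 0 < y → x ≠ y →
      Lmean x y ^ 2 < x * y + (1/3) * (Lmean x y - min x y) * (max x y - Lmean x y)) ∧
    (∀ k : ℝ, k < 1/3 → ∃ x y : ℝ, 0 < x ∧ x < y ∧
      x * y + k * (Lmean x y - x) * (y - Lmean x y) ≤ Lmean x y ^ 2) := by
  constructor
  · intro x y hx hy hxy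
    rcases hxy.lt_or_gt with h | h
    · rw [min_eq_left h.le, max_eq_right h.le]
      exact main1 x y hx h
    · have hsym : Lmean x y = Lmean y x := by
        rw [Lmean, Lmean, show x - y = -(y-x) by ring,
          show Real.log x - Real.log y = -(Real.log y - Real.log x) by ring, neg_div_neg_eq]
      rw [min_eq_right h.le, max_eq_left h.le, hsym, mul_comm]
      exact main1 y x hy h
  · exact fun k hk => main2 k hk
end

section
/- For all reals 0 < x < y: xy + (1/3)(L(x,y) - x)(y - L(x,y)) < ((x+y)/2)^2, where L is the logarithmic mean. Hence the mean G̃(x,y) := sqrt(xy + (1/3)(L(x,y)-x)(y-L(x,y))) satisfies L(x,y) < G̃(x,y) < (x+y)/2. -/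
/-!
Write `A = (x + y) / 2` and `G = √(xy)`. Since `(L - x)(y - L) ≤ ((y - x) / 2)²` for every `L`,
the first inequality is pure algebra. The second, `L² < xy + (L - x)(y - L) / 3`, says
`f(L) = 4L² - 2AL - 2G² < 0`. The convex function `f` is negative at `0` and at
`M = (2G + A) / 3` (there `f(M) = -2(A - G)² / 9`), hence on `[0, M]`, and Carlson's inequality
`L < M` puts the logarithmic mean there. With `s = √(y / x)`, Carlson's inequality reads
`3(s² - 1) / (s² + 4s + 1) < log s`, and the difference of the two sides vanishes at `s = 1` and
has derivative `(s - 1)⁴ / (s(s² + 4s + 1)²)`.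
-/

open Real MeasureTheory Set Filter

lemma hasDerivAt_log_sub_three_mul_sq_sub_one_div {s : ℝ} (hs : 0 < s) :
    HasDerivAt (fun s => log s - 3 * (s ^ 2 - 1) / (s ^ 2 + 4 * s + 1))
      ((s - 1) ^ 4 / (s * (s ^ 2 + 4 * s + 1) ^ 2)) s := by
  have hden : s ^ 2 + 4 * s + 1 ≠ 0 := by positivity
  have hrat := (((hasDerivAt_pow 2 s).sub_const 1).const_mul 3).div
    (((hasDerivAt_pow 2 s).add ((hasDerivAt_id s).const_mul 4)).add_const 1) hden
  refine ((hasDerivAt_log hs.ne').sub hrat).congr_deriv ?_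
  simp only [Pi.add_apply, id]
  field_simp
  ring

lemma three_mul_sq_sub_one_div_lt_log {s : ℝ} (hs : 1 < s) :
    3 * (s ^ 2 - 1) / (s ^ 2 + 4 * s + 1) < log s := by
  have hmono : StrictMonoOn (fun s => log s - 3 * (s ^ 2 - 1) / (s ^ 2 + 4 * s + 1)) (Ici 1) := by
    refine strictMonoOn_of_hasDerivWithinAt_pos
      (f' := fun t => (t - 1) ^ 4 / (t * (t ^ 2 + 4 * t + 1) ^ 2)) (convex_Ici 1)
      (fun t ht => (hasDerivAt_log_sub_three_mul_sq_sub_one_div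
        (one_pos.trans_le ht)).continuousAt.continuousWithinAt)
      (fun t ht => ?_) (fun t ht => ?_) <;> rw [interior_Ici] at ht
    · exact (hasDerivAt_log_sub_three_mul_sq_sub_one_div (one_pos.trans ht)).hasDerivWithinAt
    · have : 0 < t := one_pos.trans ht
      have : 0 < t - 1 := sub_pos.2 ht
      positivity
  have := hmono self_mem_Ici hs.le hs
  norm_num at this
  linarith

lemma Lmean_pos {x y : ℝ} (hx : 0 < x) (hxy : x < y) : 0 < Lmean x y :=
  div_pos (sub_pos.2 hxy) (sub_pos.2 (log_lt_log hx hxy))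

lemma Lmean_lt_carlson {x y : ℝ} (hx : 0 < x) (hxy : x < y) :
    Lmean x y < (2 * √(x * y) + (x + y) / 2) / 3 := by
  obtain ⟨a, ha, rfl⟩ : ∃ a, 0 < a ∧ a ^ 2 = x := ⟨√x, sqrt_pos.2 hx, sq_sqrt hx.le⟩
  obtain ⟨b, hb, rfl⟩ : ∃ b, 0 < b ∧ b ^ 2 = y :=
    ⟨√y, sqrt_pos.2 (hx.trans hxy), sq_sqrt (hx.trans hxy).le⟩
  have hab : 1 < b / a := (one_lt_div ha).2 (lt_of_pow_lt_pow_left₀ 2 hb.le hxy)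
  have hlog : log (b ^ 2) - log (a ^ 2) = 2 * log (b / a) := by
    rw [log_pow, log_pow, log_div hb.ne' ha.ne']
    push_cast
    ring
  have hsqrt : √(a ^ 2 * b ^ 2) = a * b := by
    rw [← mul_pow, sqrt_sq (mul_pos ha hb).le]
  have hlog_pos : 0 < log (b / a) := log_pos hab
  have h := three_mul_sq_sub_one_div_lt_log hab
  rw [div_lt_iff₀ (by positivity)] at h
  field_simp at h
  rw [Lmean, hlog, hsqrt, div_lt_iff₀ (by positivity)]
  linarith

lemma mul_add_third_lt_sq_add_div_two {x y : ℝ} (hxy : x < y) (L : ℝ) :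
    x * y + (1/3) * (L - x) * (y - L) < ((x + y) / 2) ^ 2 := by
  nlinarith [sq_nonneg (L - (x + y) / 2), mul_pos (sub_pos.2 hxy) (sub_pos.2 hxy)]

lemma sq_lt_mul_add_third_of_lt_carlson {x y L : ℝ} (hx : 0 < x) (hy : 0 < y) (hL : 0 ≤ L)
    (h : L < (2 * √(x * y) + (x + y) / 2) / 3) :
    L ^ 2 < x * y + (1/3) * (L - x) * (y - L) := by
  set g := √(x * y)
  have hg : 0 < g := sqrt_pos.2 (mul_pos hx hy)
  have hg2 : g ^ 2 = x * y := sq_sqrt (mul_pos hx hy).le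
  set M := (2 * g + (x + y) / 2) / 3 with hM
  have hM0 : 0 < M := hL.trans_lt h
  -- `f(L)` against its chord over `[0, M]`; `f` has leading coefficient `4`.
  have hchord : M * (4 * L ^ 2 - (x + y) * L - 2 * g ^ 2) =
      -2 * (M - L) * g ^ 2 - 2 / 9 * L * ((x + y) / 2 - g) ^ 2 - 4 * L * M * (M - L) := by
    rw [hM]
    ring
  nlinarith [mul_pos (sub_pos.2 h) (pow_pos hg 2), mul_nonneg hL (sq_nonneg ((x + y) / 2 - g)),
    mul_nonneg (mul_nonneg hL hM0.le) (sub_pos.2 h).le]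

theorem stmt7 (x y : ℝ) (hx : 0 < x) (hxy : x < y) :
    x * y + (1/3) * (Lmean x y - x) * (y - Lmean x y) < ((x + y)/2) ^ 2 ∧
    Lmean x y < Real.sqrt (x * y + (1/3) * (Lmean x y - x) * (y - Lmean x y)) ∧
    Real.sqrt (x * y + (1/3) * (Lmean x y - x) * (y - Lmean x y)) < (x + y)/2 := by
  have hupper := mul_add_third_lt_sq_add_div_two hxy (Lmean x y)
  have hL := (Lmean_pos hx hxy).le
  refine ⟨hupper, (lt_sqrt hL).2 ?_, (sqrt_lt' (by linarith)).2 hupper⟩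
  exact sq_lt_mul_add_third_of_lt_carlson hx (hx.trans hxy) hL (Lmean_lt_carlson hx hxy)
end

section
/- The function λ(y) := (y - l(y)^2) / ((l(y) - 1)(y - l(y))), where l(y) = (y-1)/ln y, is strictly increasing on (1, ∞). -/
/-!
In the variable `t = log y > 0` one has `l - 1 = A / t` and `y - l = B / t` with
`A = eᵗ - 1 - t` and `B = t eᵗ - eᵗ + 1`, and `λ = t / A - (eᵗ - 1) / B`. Its derivative is
`(eᵗ A³ - B³) / (A² B²)`, so monotonicity reduces to `B < e^{t/3} A`. Writing `t = 3s`,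
`e^{-2s} (e^{s} A - B) / 2 = sinh 2s + sinh s - 3 s cosh s = cosh s (2 sinh s + tanh s - 3 s)`,
and `2 sinh s + tanh s - 3 s` is increasing from `0`: its derivative is
`(cosh s - 1)² (2 cosh s + 1) / cosh² s`.
-/

open Real Set

noncomputable def l (y : ℝ) : ℝ := (y - 1) / Real.log y

lemma three_mul_lt_two_mul_sinh_add_sinh_div_cosh {s : ℝ} (hs : 0 < s) :
    3 * s < 2 * sinh s + sinh s / cosh s := by
  set g : ℝ → ℝ := fun x => 2 * sinh x + sinh x / cosh x - 3 * x
  have hg : ∀ x, HasDerivAt g ((cosh x - 1) ^ 2 * (2 * cosh x + 1) / cosh x ^ 2) x := fun x =>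
    (((hasDerivAt_sinh x).const_mul 2).add
      ((hasDerivAt_sinh x).div (hasDerivAt_cosh x) (cosh_pos x).ne')).sub
      ((hasDerivAt_id x).const_mul 3) |>.congr_deriv <| by
        rw [show cosh x * cosh x - sinh x * sinh x = 1 by linear_combination cosh_sq_sub_sinh_sq x]
        field_simp
        ring
  have hmono : StrictMonoOn g (Ici 0) := by
    refine strictMonoOn_of_deriv_pos (convex_Ici 0)
      (fun x _ => (hg x).continuousAt.continuousWithinAt) fun x hx => ?_
    rw [interior_Ici] at hx
    have hc : 1 < cosh x := one_lt_cosh.mpr (ne_of_gt hx)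
    rw [(hg x).deriv]
    exact div_pos (mul_pos (pow_pos (by linarith) 2) (by linarith)) (pow_pos (cosh_pos x) 2)
  have := hmono self_mem_Ici (mem_Ici.mpr hs.le) hs
  simp only [g, sinh_zero, cosh_zero] at this
  linarith

lemma three_mul_mul_cosh_lt_sinh_two_mul_add_sinh {s : ℝ} (hs : 0 < s) :
    3 * s * cosh s < sinh (2 * s) + sinh s := by
  have h := mul_lt_mul_of_pos_right (three_mul_lt_two_mul_sinh_add_sinh_div_cosh hs) (cosh_pos s)
  rwa [add_mul, div_mul_cancel₀ _ (cosh_pos s).ne', ← sinh_two_mul] at h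

lemma exp_sub_one_sub_pos {t : ℝ} (ht : t ≠ 0) : 0 < exp t - 1 - t := by
  linarith [add_one_lt_exp ht]

lemma mul_exp_sub_exp_add_one_pos {t : ℝ} (ht : t ≠ 0) : 0 < t * exp t - exp t + 1 := by
  have h := add_one_lt_exp (neg_ne_zero.mpr ht)
  have h' := mul_lt_mul_of_pos_left h (exp_pos t)
  rw [← exp_add, add_neg_cancel, exp_zero] at h'
  linarith

lemma mul_exp_sub_exp_add_one_lt {t : ℝ} (ht : 0 < t) :
    t * exp t - exp t + 1 < exp (t / 3) * (exp t - 1 - t) := by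
  obtain ⟨s, rfl⟩ : ∃ s, t = 3 * s := ⟨t / 3, by ring⟩
  rw [show 3 * s / 3 = s by ring]
  have hsinh : 0 < sinh (2 * s) + sinh s - 3 * s * cosh s := by
    linarith [three_mul_mul_cosh_lt_sinh_two_mul_add_sinh (by linarith)]
  have hid : exp s * (exp (3 * s) - 1 - 3 * s) - (3 * s * exp (3 * s) - exp (3 * s) + 1) =
      2 * exp s ^ 2 * (sinh (2 * s) + sinh s - 3 * s * cosh s) := by
    have h3 : exp (3 * s) = exp s ^ 3 := by rw [← exp_nat_mul]; norm_num
    have h2 : exp (2 * s) = exp s ^ 2 := by rw [← exp_nat_mul]; norm_num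
    rw [sinh_eq, sinh_eq, cosh_eq, h3, h2, exp_neg, exp_neg, h2]
    field_simp
    ring
  have := mul_pos (mul_pos two_pos (pow_pos (exp_pos s) 2)) hsinh
  linarith

lemma mul_exp_sub_exp_add_one_pow_three_lt {t : ℝ} (ht : 0 < t) :
    (t * exp t - exp t + 1) ^ 3 < exp t * (exp t - 1 - t) ^ 3 := by
  have h := pow_lt_pow_left₀ (mul_exp_sub_exp_add_one_lt ht)
    (mul_exp_sub_exp_add_one_pos ht.ne').le three_ne_zero
  rwa [mul_pow, ← exp_nat_mul, show ((3 : ℕ) : ℝ) * (t / 3) = t by push_cast; ring] at h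

noncomputable def logMeanLambda (y : ℝ) : ℝ := (y - l y ^ 2) / ((l y - 1) * (y - l y))

noncomputable def expLogMeanLambda (t : ℝ) : ℝ :=
  t / (exp t - 1 - t) - (exp t - 1) / (t * exp t - exp t + 1)

lemma logMeanLambda_exp {t : ℝ} (ht : t ≠ 0) : logMeanLambda (exp t) = expLogMeanLambda t := by
  have hA := (exp_sub_one_sub_pos ht).ne'
  have hB := (mul_exp_sub_exp_add_one_pos ht).ne'
  rw [logMeanLambda, expLogMeanLambda, l, log_exp]
  generalize exp t = y at *
  rw [show (y - 1) / t - 1 = (y - 1 - t) / t by field_simp,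
    show y - (y - 1) / t = (t * y - y + 1) / t by field_simp; ring, div_sub_div _ _ hA hB,
    div_eq_div_iff (mul_ne_zero (div_ne_zero hA ht) (div_ne_zero hB ht)) (mul_ne_zero hA hB)]
  field_simp
  ring

lemma hasDerivAt_expLogMeanLambda {t : ℝ} (ht : t ≠ 0) :
    HasDerivAt expLogMeanLambda
      ((exp t * (exp t - 1 - t) ^ 3 - (t * exp t - exp t + 1) ^ 3) /
        ((exp t - 1 - t) ^ 2 * (t * exp t - exp t + 1) ^ 2)) t := by
  have hA := (exp_sub_one_sub_pos ht).ne'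
  have hB := (mul_exp_sub_exp_add_one_pos ht).ne'
  refine ((hasDerivAt_id' t).div (((hasDerivAt_exp t).sub_const 1).sub (hasDerivAt_id' t)) hA).sub
    (((hasDerivAt_exp t).sub_const 1).div
      ((((hasDerivAt_id' t).mul (hasDerivAt_exp t)).sub (hasDerivAt_exp t)).add_const 1) hB)
    |>.congr_deriv ?_
  simp only [Pi.sub_apply, Pi.mul_apply]
  rw [div_sub_div _ _ (pow_ne_zero 2 hA) (pow_ne_zero 2 hB)]
  ring

lemma strictMonoOn_expLogMeanLambda : StrictMonoOn expLogMeanLambda (Ioi 0) := by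
  refine strictMonoOn_of_deriv_pos (convex_Ioi 0)
    (fun t ht => (hasDerivAt_expLogMeanLambda (ne_of_gt ht)).continuousAt.continuousWithinAt)
    fun t ht => ?_
  rw [interior_Ioi] at ht
  rw [(hasDerivAt_expLogMeanLambda (ne_of_gt ht)).deriv]
  have hA := exp_sub_one_sub_pos (ne_of_gt ht)
  have hB := mul_exp_sub_exp_add_one_pos (ne_of_gt ht)
  exact div_pos (sub_pos.mpr (mul_exp_sub_exp_add_one_pow_three_lt ht)) (by positivity)

theorem stmt8 :
    StrictMonoOn (fun y => (y - (l y) ^ 2) / ((l y - 1) * (y - l y))) (Set.Ioi 1) := by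
  have hmono : StrictMonoOn (expLogMeanLambda ∘ log) (Ioi 1) :=
    strictMonoOn_expLogMeanLambda.comp (strictMonoOn_log.mono (Ioi_subset_Ioi zero_le_one))
      fun _ hy => log_pos hy
  refine hmono.congr fun y hy => ?_
  have hy0 : 0 < y := zero_lt_one.trans hy
  rw [Function.comp_apply, ← logMeanLambda_exp (log_pos hy).ne', exp_log hy0, logMeanLambda]
end

section
/- For all reals y > 1: y·(ln y)^2 - (y-1)^2 > -(1/3)·(y - ln y - 1)·(y·ln y - y + 1). Equivalently, λ(y) > -1/3 where λ(y) = (y - l(y)^2)/((l(y)-1)(y-l(y))) with l(y) = (y-1)/ln y. -/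
/-!
Put `y = exp t` with `t > 0`. Since `e^{2t} - 1 = 2 e^t sinh t` and `(e^t - 1)^2 = 2 e^t (cosh t - 1)`,
three times the difference of the two sides equals
`2 e^t (t^2 + t sinh t - 4 (cosh t - 1))`, whose Taylor coefficients are `(2k - 4)/(2k)!` at `t^{2k}`,
so it is positive. In place of power series, positivity is obtained by differentiating four times,
down to `t sinh t > 0`; each function in the chain vanishes at `0`.
-/

open Real

lemma pos_of_hasDerivAt_pos {f f' : ℝ → ℝ} {a x : ℝ} (hf : ∀ t, HasDerivAt f (f' t) t)
    (hf' : ∀ t, a < t → 0 < f' t) (ha : f a = 0) (hx : a < x) : 0 < f x := by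
  have hmono : StrictMonoOn f (Set.Ici a) :=
    strictMonoOn_of_deriv_pos (convex_Ici a) (fun t _ => (hf t).continuousAt.continuousWithinAt)
      fun t ht => by
        rw [interior_Ici] at ht
        rw [(hf t).deriv]
        exact hf' t ht
  simpa [ha] using hmono Set.self_mem_Ici hx.le hx

namespace Real

variable {x : ℝ}

lemma sinh_lt_mul_cosh (hx : 0 < x) : sinh x < x * cosh x := by
  refine sub_pos.1 (pos_of_hasDerivAt_pos (f := fun t => t * cosh t - sinh t)
    (f' := fun t => t * sinh t) (fun t => ?_) (fun t ht => mul_pos ht (sinh_pos_iff.2 ht))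
    (by simp) hx)
  refine (((hasDerivAt_id t).mul (hasDerivAt_cosh t)).sub (hasDerivAt_sinh t)).congr_deriv ?_
  simp only [id]; ring

lemma two_mul_cosh_sub_one_lt (hx : 0 < x) : 2 * (cosh x - 1) < x * sinh x := by
  refine sub_pos.1 (pos_of_hasDerivAt_pos (f := fun t => t * sinh t - 2 * (cosh t - 1))
    (f' := fun t => t * cosh t - sinh t) (fun t => ?_)
    (fun t ht => sub_pos.2 (sinh_lt_mul_cosh ht)) (by simp) hx)
  refine (((hasDerivAt_id t).mul (hasDerivAt_sinh t)).sub
    (((hasDerivAt_cosh t).sub_const 1).const_mul 2)).congr_deriv ?_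
  simp only [id]; ring

lemma three_mul_sinh_lt (hx : 0 < x) : 3 * sinh x < 2 * x + x * cosh x := by
  refine sub_pos.1 (pos_of_hasDerivAt_pos (f := fun t => 2 * t + t * cosh t - 3 * sinh t)
    (f' := fun t => 2 + t * sinh t - 2 * cosh t) (fun t => ?_)
    (fun t ht => by linarith [two_mul_cosh_sub_one_lt ht]) (by simp) hx)
  refine ((((hasDerivAt_id t).const_mul 2).add ((hasDerivAt_id t).mul (hasDerivAt_cosh t))).sub
    ((hasDerivAt_sinh t).const_mul 3)).congr_deriv ?_
  simp only [id]; ring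

lemma four_mul_cosh_sub_one_lt (hx : 0 < x) : 4 * (cosh x - 1) < x ^ 2 + x * sinh x := by
  refine sub_pos.1 (pos_of_hasDerivAt_pos (f := fun t => t ^ 2 + t * sinh t - 4 * (cosh t - 1))
    (f' := fun t => 2 * t + t * cosh t - 3 * sinh t) (fun t => ?_)
    (fun t ht => sub_pos.2 (three_mul_sinh_lt ht)) (by simp) hx)
  refine (((hasDerivAt_pow 2 t).add ((hasDerivAt_id t).mul (hasDerivAt_sinh t))).sub
    (((hasDerivAt_cosh t).sub_const 1).const_mul 4)).congr_deriv ?_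
  simp only [id]; ring

end Real

theorem stmt10 (y : ℝ) (hy : 1 < y) :
    y * (Real.log y) ^ 2 - (y - 1) ^ 2 >
      -(1/3) * (y - Real.log y - 1) * (y * Real.log y - y + 1) := by
  obtain ⟨t, ht, rfl⟩ : ∃ t, 0 < t ∧ y = exp t := ⟨log y, log_pos hy, (exp_log (by linarith)).symm⟩
  rw [log_exp]
  have key : 3 * (exp t * t ^ 2 - (exp t - 1) ^ 2
      + 1 / 3 * (exp t - t - 1) * (exp t * t - exp t + 1))
      = 2 * exp t * (t ^ 2 + t * sinh t - 4 * (cosh t - 1)) := by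
    rw [sinh_eq, cosh_eq, exp_neg]
    field_simp
    ring
  have hpos := mul_pos (exp_pos t) (sub_pos.2 (four_mul_cosh_sub_one_lt ht))
  linarith
end

section
/- For a real constant c, the following are equivalent: (a) c ≤ -1/3; (b) for all 0 < x < y, c < (xy - L(x,y)^2)/((L(x,y) - x)(y - L(x,y))), where L is the logarithmic mean. -/
open Real MeasureTheory Set Filter

/-!
Write `L = L(x, y)` and `D = (L - x)(y - L)`. The bound `-1/3 < (xy - L²)/D` is equivalent to
`4L² - (x + y)L - 2xy < 0`. With `x = a²`, `y = b²`, Carlson's inequality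
`L ≤ M = (a² + 4ab + b²)/6` puts `L` between `0` and `M`, where this convex quadratic in `L` takes
the negative values `-2a²b²` and `-(b - a)⁴/18`.

Conversely, for `x = 1`, `y = t`, the lower bound `L ≥ (4t + 2)/(t + 5)` and `D ≤ (t - 1)²/4` give
`(xy - L²)/D ≤ -4(4 - t)/(t + 5)²`, which tends to `-1/3` as `t → 1⁺`.
-/

theorem le_of_hasDerivAt_le {f g f' g' : ℝ → ℝ} {a b : ℝ} (hab : a ≤ b) (ha : f a ≤ g a)
    (hf : ∀ x ∈ Icc a b, HasDerivAt f (f' x) x) (hg : ∀ x ∈ Icc a b, HasDerivAt g (g' x) x)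
    (h : ∀ x ∈ Ico a b, f' x ≤ g' x) : f b ≤ g b :=
  image_le_of_deriv_right_le_deriv_boundary (fun x hx ↦ (hf x hx).continuousAt.continuousWithinAt)
    (fun x hx ↦ (hf x (Ico_subset_Icc_self hx)).hasDerivWithinAt) ha
    (fun x hx ↦ (hg x hx).continuousAt.continuousWithinAt)
    (fun x hx ↦ (hg x (Ico_subset_Icc_self hx)).hasDerivWithinAt) h ⟨hab, le_rfl⟩

section Pade

/- The rational functions below are the `[2/1]` and `[2/2]` Padé approximants of `log` at `1`. -/

theorem hasDerivAt_pade21 {t : ℝ} (ht : 0 < t) :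
    HasDerivAt (fun s ↦ (s - 1) * (s + 5) / (4 * s + 2))
      (4 * (t ^ 2 + t + 7) / (4 * t + 2) ^ 2) t :=
  ((((hasDerivAt_id' t).sub_const 1).fun_mul ((hasDerivAt_id' t).add_const 5)).fun_div
    (((hasDerivAt_id' t).const_mul 4).add_const 2) (by positivity)).congr_deriv (by ring)

theorem hasDerivAt_pade22 {t : ℝ} (ht : 0 < t) :
    HasDerivAt (fun s ↦ 3 * (s ^ 2 - 1) / (s ^ 2 + 4 * s + 1))
      (12 * (t ^ 2 + t + 1) / (t ^ 2 + 4 * t + 1) ^ 2) t :=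
  ((((hasDerivAt_pow 2 t).sub_const 1).const_mul 3).fun_div
    (((hasDerivAt_pow 2 t).fun_add ((hasDerivAt_id' t).const_mul 4)).add_const 1)
    (by positivity)).congr_deriv (by ring)

theorem log_le_pade21 {s : ℝ} (hs : 1 ≤ s) : log s ≤ (s - 1) * (s + 5) / (4 * s + 2) := by
  refine le_of_hasDerivAt_le hs (by norm_num) (fun t ht ↦ hasDerivAt_log (by linarith [ht.1]))
    (fun t ht ↦ hasDerivAt_pade21 (by linarith [ht.1])) fun t ⟨ht1, _⟩ ↦ ?_
  rw [inv_eq_one_div, div_le_div_iff₀ (by positivity) (by positivity)]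
  nlinarith [pow_nonneg (sub_nonneg.2 ht1) 3]

theorem pade22_le_log {s : ℝ} (hs : 1 ≤ s) : 3 * (s ^ 2 - 1) / (s ^ 2 + 4 * s + 1) ≤ log s := by
  refine le_of_hasDerivAt_le hs (by norm_num) (fun t ht ↦ hasDerivAt_pade22 (by linarith [ht.1]))
    (fun t ht ↦ hasDerivAt_log (by linarith [ht.1])) fun t ⟨ht1, _⟩ ↦ ?_
  rw [inv_eq_one_div, div_le_div_iff₀ (by positivity) (by positivity)]
  nlinarith [pow_nonneg (sub_nonneg.2 ht1) 4]

end Pade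

section Lmean

variable {x y : ℝ}

theorem lt_Lmean (hx : 0 < x) (hxy : x < y) : x < Lmean x y := by
  have hy : 0 < y := hx.trans hxy
  have hlog : log (y / x) < y / x - 1 :=
    log_lt_sub_one_of_pos (by positivity) ((one_lt_div hx).2 hxy).ne'
  rw [log_div hy.ne' hx.ne'] at hlog
  rw [Lmean, lt_div_iff₀ (sub_pos.2 (log_lt_log hx hxy))]
  calc x * (log y - log x) < x * (y / x - 1) := by gcongr
    _ = y - x := by field_simp

theorem Lmean_lt (hx : 0 < x) (hxy : x < y) : Lmean x y < y := by
  have hy : 0 < y := hx.trans hxy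
  have hlog : log (x / y) < x / y - 1 :=
    log_lt_sub_one_of_pos (by positivity) ((div_lt_one hy).2 hxy).ne
  rw [log_div hx.ne' hy.ne'] at hlog
  rw [Lmean, div_lt_iff₀ (sub_pos.2 (log_lt_log hx hxy))]
  calc y - x = y * (1 - x / y) := by field_simp
    _ < y * (log y - log x) := mul_lt_mul_of_pos_left (by linarith) hy

/-- Carlson's inequality `L(x, y) ≤ (x + y + 4√(xy))/6`, written for `x = a²`, `y = b²`. -/
theorem Lmean_sq_le {a b : ℝ} (ha : 0 < a) (hab : a < b) :
    Lmean (a ^ 2) (b ^ 2) ≤ (a ^ 2 + 4 * a * b + b ^ 2) / 6 := by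
  have hb : 0 < b := ha.trans hab
  have hlog : log (b ^ 2) - log (a ^ 2) = 2 * log (b / a) := by
    rw [log_pow, log_pow, log_div hb.ne' ha.ne']
    push_cast
    ring
  have hlog_pos : 0 < log (b / a) := log_pos ((one_lt_div ha).2 hab)
  have hpade := pade22_le_log ((one_le_div ha).2 hab.le)
  have hrat : 3 * ((b / a) ^ 2 - 1) / ((b / a) ^ 2 + 4 * (b / a) + 1)
      = 3 * (b ^ 2 - a ^ 2) / (a ^ 2 + 4 * a * b + b ^ 2) := by
    field_simp
    ring
  rw [hrat, div_le_iff₀ (by positivity)] at hpade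
  rw [Lmean, hlog, div_le_div_iff₀ (by positivity) (by norm_num)]
  linarith

theorem pade21_le_Lmean_one {t : ℝ} (ht : 1 < t) : (4 * t + 2) / (t + 5) ≤ Lmean 1 t := by
  have hpade := log_le_pade21 ht.le
  rw [le_div_iff₀ (by positivity)] at hpade
  rw [Lmean, log_one, sub_zero, div_le_div_iff₀ (by positivity) (log_pos ht)]
  linarith

end Lmean

noncomputable def lmeanRatio (x y : ℝ) : ℝ :=
  (x * y - Lmean x y ^ 2) / ((Lmean x y - x) * (y - Lmean x y))

theorem neg_one_third_lt_lmeanRatio {x y : ℝ} (hx : 0 < x) (hxy : x < y) :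
    -1 / 3 < lmeanRatio x y := by
  obtain ⟨a, ha, rfl⟩ : ∃ a, 0 < a ∧ a ^ 2 = x := ⟨√x, sqrt_pos.2 hx, sq_sqrt hx.le⟩
  obtain ⟨b, hb, rfl⟩ : ∃ b, 0 < b ∧ b ^ 2 = y :=
    ⟨√y, sqrt_pos.2 (hx.trans hxy), sq_sqrt (hx.trans hxy).le⟩
  have hab : a < b := (pow_lt_pow_iff_left₀ ha.le hb.le two_ne_zero).1 hxy
  set L := Lmean (a ^ 2) (b ^ 2)
  set M := (a ^ 2 + 4 * a * b + b ^ 2) / 6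
  have hxL : a ^ 2 < L := lt_Lmean hx hxy
  have hLy : L < b ^ 2 := Lmean_lt hx hxy
  have hLM : L ≤ M := Lmean_sq_le ha hab
  have hquad : 4 * L ^ 2 - (a ^ 2 + b ^ 2) * L - 2 * (a * b) ^ 2 < 0 := by
    -- convexity of the quadratic on `[0, M]`, where its values are `-2(ab)²` and `-(b - a)⁴/18`
    have hconv : M * (4 * L ^ 2 - (a ^ 2 + b ^ 2) * L - 2 * (a * b) ^ 2)
        = 4 * L * M * (L - M) - L * (b - a) ^ 4 / 18 - (M - L) * (2 * (a * b) ^ 2) := by ring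
    have hM : 0 < M := by positivity
    have hL : 0 < L := (pow_pos ha 2).trans hxL
    have : M * (4 * L ^ 2 - (a ^ 2 + b ^ 2) * L - 2 * (a * b) ^ 2) < 0 := by
      rw [hconv]
      nlinarith [mul_nonneg (mul_pos hL hM).le (sub_nonneg.2 hLM),
        mul_pos hL (pow_pos (sub_pos.2 hab) 4), mul_nonneg (sub_nonneg.2 hLM) (sq_nonneg (a * b))]
    exact neg_of_mul_neg_right this hM.le
  rw [lmeanRatio, lt_div_iff₀ (mul_pos (sub_pos.2 hxL) (sub_pos.2 hLy))]
  linarith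

theorem lmeanRatio_one_le {t : ℝ} (ht1 : 1 < t) (ht4 : t < 4) :
    lmeanRatio 1 t ≤ -4 * (4 - t) / (t + 5) ^ 2 := by
  set L := Lmean 1 t
  have h1L : 1 < L := lt_Lmean one_pos ht1
  have hLt : L < t := Lmean_lt one_pos ht1
  have hgap : (t - 1) ^ 2 * (4 - t) / (t + 5) ^ 2 ≤ L ^ 2 - t := by
    have hsq := pow_le_pow_left₀ (by positivity) (pade21_le_Lmean_one ht1) 2
    have : ((4 * t + 2) / (t + 5)) ^ 2 - t = (t - 1) ^ 2 * (4 - t) / (t + 5) ^ 2 := by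
      field_simp
      ring
    linarith
  have hD : 0 < (L - 1) * (t - L) := mul_pos (sub_pos.2 h1L) (sub_pos.2 hLt)
  have hDle : (L - 1) * (t - L) ≤ (t - 1) ^ 2 / 4 := by nlinarith [sq_nonneg (2 * L - 1 - t)]
  have hq : 0 ≤ 4 * (4 - t) / (t + 5) ^ 2 := div_nonneg (by linarith) (by positivity)
  rw [lmeanRatio, one_mul, div_le_iff₀ hD]
  calc t - L ^ 2 ≤ -((t - 1) ^ 2 * (4 - t) / (t + 5) ^ 2) := by linarith
    _ = -(4 * (4 - t) / (t + 5) ^ 2) * ((t - 1) ^ 2 / 4) := by ring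
    _ ≤ -(4 * (4 - t) / (t + 5) ^ 2) * ((L - 1) * (t - L)) :=
      mul_le_mul_of_nonpos_left hDle (neg_nonpos.2 hq)
    _ = -4 * (4 - t) / (t + 5) ^ 2 * ((L - 1) * (t - L)) := by ring

theorem exists_lmeanRatio_le {c : ℝ} (hc : -1 / 3 < c) :
    ∃ x y, 0 < x ∧ x < y ∧ lmeanRatio x y ≤ c := by
  set ε := min 1 (c + 1 / 3)
  have hε0 : 0 < ε := lt_min one_pos (by linarith)
  have hε1 : ε ≤ 1 := min_le_left _ _
  have hεc : ε ≤ c + 1 / 3 := min_le_right _ _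
  refine ⟨1, 1 + ε, one_pos, by linarith,
    (lmeanRatio_one_le (by linarith) (by linarith)).trans ?_⟩
  rw [div_le_iff₀ (by positivity)]
  nlinarith [mul_le_mul_of_nonneg_right hεc (sq_nonneg (1 + ε + 5)), mul_pos hε0 hε0, pow_pos hε0 3]

theorem stmt11 (c : ℝ) :
    c ≤ -1/3 ↔ ∀ x y : ℝ, 0 < x → x < y →
      c < (x * y - Lmean x y ^ 2) / ((Lmean x y - x) * (y - Lmean x y)) := by
  refine ⟨fun hc x y hx hxy ↦ hc.trans_lt (neg_one_third_lt_lmeanRatio hx hxy), fun h ↦ ?_⟩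
  by_contra! hc
  obtain ⟨x, y, hx, hxy, hle⟩ := exists_lmeanRatio_le hc
  exact (h x y hx hxy).not_ge hle
end

section
/- Let x1 ∈ (0,1) and x2 ∈ (1,∞) satisfy x1·e^{1-x1} = x2·e^{1-x2}, and let c ≥ 0. Then 1 - x1·x2 + c(1 - x1)(x2 - 1) > 0. -/
open Real

lemma phi_anti : StrictAntiOn (fun x : ℝ => x * Real.exp (1 - x)) (Set.Ici 1) := by
  apply strictAntiOn_of_deriv_neg (convex_Ici 1)
  · fun_prop
  · intro x hx
    rw [interior_Ici] at hx
    have hd : HasDerivAt (fun x : ℝ => x * Real.exp (1 - x))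
        (1 * Real.exp (1 - x) + x * (Real.exp (1 - x) * (-1))) x :=
      (hasDerivAt_id x).mul (((hasDerivAt_id x).const_sub 1).exp)
    rw [hd.deriv]
    have := Real.exp_pos (1 - x)
    nlinarith [hx.out]

theorem stmt14 (x1 x2 c : ℝ) (h1 : x1 ∈ Set.Ioo (0:ℝ) 1) (h2 : x2 ∈ Set.Ioi (1:ℝ))
    (h : x1 * Real.exp (1 - x1) = x2 * Real.exp (1 - x2)) (hc : 0 ≤ c) :
    0 < 1 - x1 * x2 + c * (1 - x1) * (x2 - 1) := by
  obtain ⟨hx0, hx1⟩ := h1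
  have hx2 : 1 < x2 := h2
  set s : ℝ := -Real.log x1 with hs_def
  have hs : 0 < s := by
    have := Real.log_neg hx0 hx1
    simp [hs_def]; linarith
  have hx1e : x1 = Real.exp (-s) := by
    simp [hs_def, Real.exp_log hx0]
  have hinv : 1 / x1 = Real.exp s := by
    rw [hx1e, one_div, ← Real.exp_neg, neg_neg]
  -- key inequality: phi(1/x1) < phi(x1)
  have hsinh : s < Real.sinh s := Real.self_lt_sinh_iff.mpr hs
  have key : (1 / x1) * Real.exp (1 - 1 / x1) < x1 * Real.exp (1 - x1) := by
    rw [hinv, hx1e, ← Real.exp_add, ← Real.exp_add]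
    apply Real.exp_lt_exp.mpr
    have := Real.sinh_eq s
    have h1 : Real.exp (-s) = 1 / Real.exp s := by rw [Real.exp_neg]; ring
    nlinarith [Real.exp_pos s]
  have hx2lt : x2 < 1 / x1 := by
    by_contra hle
    push_neg at hle
    have h1x : (1:ℝ) ≤ 1 / x1 := by
      rw [le_div_iff₀ hx0]; linarith
    rcases eq_or_lt_of_le hle with heq | hlt
    · rw [heq] at key; rw [h] at key; linarith
    · have := phi_anti (Set.mem_Ici.mpr h1x) (Set.mem_Ici.mpr hx2.le) hlt
      simp only at this
      rw [← h] at this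
      linarith
  have hprod : x1 * x2 < 1 := by
    have := (mul_lt_mul_iff_right₀ hx0).mpr hx2lt
    rw [mul_one_div, div_self hx0.ne'] at this
    exact this
  have hnn : 0 ≤ c * (1 - x1) * (x2 - 1) :=
    mul_nonneg (mul_nonneg hc (by linarith)) (by linarith)
  linarith
end

section
/- (l'Hospital-type rule for monotonicity.) Let -∞ ≤ A < B ≤ ∞ and let f, g : (A,B) → ℝ be differentiable with f(A+) = g(A+) = 0. Suppose g and g' are nonvanishing and of constant sign on (A,B), and f'/g' is strictly increasing on (A,B). Then f/g is strictly increasing on (A,B). -/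
/-!
Since `g'` has constant sign we may replace `(f, g)` by `(-f, -g)` and assume `g' > 0`; then `g`
increases from `g(A+) = 0`, so `g > 0`. For `a < m < x`, Cauchy's mean value theorem writes
`(f m - f a) / (g m - g a)` as `f'/g'` at a point left of `x`, hence below `f'(x)/g'(x)`; letting
`a → A+` gives `f m / g m ≤ f'(x)/g'(x)`. As `f x / g x` is a weighted mean of `f m / g m` and
`(f x - f m) / (g x - g m) < f'(x)/g'(x)`, we get `f/g < f'/g'` on `(A, B)`, and then
`(f/g)' = (g'/g) (f'/g' - f/g) > 0`.
-/

open Set Filter Topology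

section LeftEndLimit

variable {f g : ℝ → ℝ} {S : Set ℝ} {l : Filter ℝ}

theorem strictMonoOn_of_differentiableAt_of_deriv_pos (hS : S.OrdConnected)
    (hg : ∀ x ∈ S, DifferentiableAt ℝ g x) (hg' : ∀ x ∈ S, 0 < deriv g x) :
    StrictMonoOn g S :=
  strictMonoOn_of_deriv_pos hS.convex (fun x hx => (hg x hx).continuousAt.continuousWithinAt)
    fun x hx => hg' x (interior_subset hx)

theorem StrictMonoOn.pos_of_tendsto_zero [l.NeBot] (hg : StrictMonoOn g S)
    (hl : ∀ x ∈ S, ∀ᶠ a in l, a ∈ S ∧ a < x) (hg0 : Tendsto g l (𝓝 0))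
    {x : ℝ} (hx : x ∈ S) : 0 < g x := by
  obtain ⟨m, hm, hmx⟩ := (hl x hx).exists
  have hgm : 0 ≤ g m := le_of_tendsto hg0 <| (hl m hm).mono fun a ha => (hg ha.1 hm ha.2).le
  exact hgm.trans_lt (hg hm hx hmx)

theorem div_sub_lt_deriv_div (hS : S.OrdConnected)
    (hf : ∀ x ∈ S, DifferentiableAt ℝ f x) (hg : ∀ x ∈ S, DifferentiableAt ℝ g x)
    (hg' : ∀ x ∈ S, 0 < deriv g x) (hmono : StrictMonoOn (fun x => deriv f x / deriv g x) S)
    {a b x : ℝ} (ha : a ∈ S) (hx : x ∈ S) (hab : a < b) (hbx : b ≤ x) :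
    (f b - f a) / (g b - g a) < deriv f x / deriv g x := by
  have hsub : Icc a b ⊆ S := hS.out ha (hS.out ha hx ⟨hab.le, hbx⟩)
  obtain ⟨c, hc, hcc⟩ := exists_ratio_deriv_eq_ratio_slope (f := f) (g := g) (hab := hab)
    (hfc := fun y hy => (hf y (hsub hy)).continuousAt.continuousWithinAt)
    (hfd := fun y hy => (hf y (hsub (Ioo_subset_Icc_self hy))).differentiableWithinAt)
    (hgc := fun y hy => (hg y (hsub hy)).continuousAt.continuousWithinAt)
    (hgd := fun y hy => (hg y (hsub (Ioo_subset_Icc_self hy))).differentiableWithinAt)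
  have hcS : c ∈ S := hsub (Ioo_subset_Icc_self hc)
  have hgab : 0 < g b - g a := sub_pos.2 <| strictMonoOn_of_differentiableAt_of_deriv_pos
    hS hg hg' ha (hsub (right_mem_Icc.2 hab.le)) hab
  calc (f b - f a) / (g b - g a) = deriv f c / deriv g c := by
        rw [div_eq_div_iff hgab.ne' (hg' c hcS).ne']; linarith
    _ < deriv f x / deriv g x := hmono hcS hx (hc.2.trans_le hbx)

theorem div_le_deriv_div_of_lt [l.NeBot] (hS : S.OrdConnected)
    (hf : ∀ x ∈ S, DifferentiableAt ℝ f x) (hg : ∀ x ∈ S, DifferentiableAt ℝ g x)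
    (hg' : ∀ x ∈ S, 0 < deriv g x) (hmono : StrictMonoOn (fun x => deriv f x / deriv g x) S)
    (hl : ∀ x ∈ S, ∀ᶠ a in l, a ∈ S ∧ a < x)
    (hf0 : Tendsto f l (𝓝 0)) (hg0 : Tendsto g l (𝓝 0))
    {m x : ℝ} (hm : m ∈ S) (hx : x ∈ S) (hmx : m < x) :
    f m / g m ≤ deriv f x / deriv g x := by
  have hgm : g m ≠ 0 :=
    ((strictMonoOn_of_differentiableAt_of_deriv_pos hS hg hg').pos_of_tendsto_zero hl hg0 hm).ne'
  have hslope : Tendsto (fun a => (f m - f a) / (g m - g a)) l (𝓝 (f m / g m)) := by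
    have h := ((tendsto_const_nhds (x := f m)).sub hf0).div
      ((tendsto_const_nhds (x := g m)).sub hg0) (by rwa [sub_zero])
    rwa [sub_zero, sub_zero] at h
  refine le_of_tendsto hslope <| (hl m hm).mono fun a ha => ?_
  exact (div_sub_lt_deriv_div hS hf hg hg' hmono ha.1 hx ha.2 hmx.le).le

theorem div_lt_deriv_div [l.NeBot] (hS : S.OrdConnected)
    (hf : ∀ x ∈ S, DifferentiableAt ℝ f x) (hg : ∀ x ∈ S, DifferentiableAt ℝ g x)
    (hg' : ∀ x ∈ S, 0 < deriv g x) (hmono : StrictMonoOn (fun x => deriv f x / deriv g x) S)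
    (hl : ∀ x ∈ S, ∀ᶠ a in l, a ∈ S ∧ a < x)
    (hf0 : Tendsto f l (𝓝 0)) (hg0 : Tendsto g l (𝓝 0))
    {x : ℝ} (hx : x ∈ S) :
    f x / g x < deriv f x / deriv g x := by
  have hgmono := strictMonoOn_of_differentiableAt_of_deriv_pos hS hg hg'
  obtain ⟨m, hm, hmx⟩ := (hl x hx).exists
  have hgm : 0 < g m := hgmono.pos_of_tendsto_zero hl hg0 hm
  have hgxm : 0 < g x - g m := sub_pos.2 (hgmono hm hx hmx)
  have hleft : f m ≤ deriv f x / deriv g x * g m :=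
    (div_le_iff₀ hgm).1 (div_le_deriv_div_of_lt hS hf hg hg' hmono hl hf0 hg0 hm hx hmx)
  have hright : f x - f m < deriv f x / deriv g x * (g x - g m) :=
    (div_lt_iff₀ hgxm).1 (div_sub_lt_deriv_div hS hf hg hg' hmono hm hx hmx le_rfl)
  rw [div_lt_iff₀ (hgmono.pos_of_tendsto_zero hl hg0 hx)]
  linarith

theorem strictMonoOn_div_of_deriv_pos [l.NeBot] (hS : S.OrdConnected)
    (hf : ∀ x ∈ S, DifferentiableAt ℝ f x) (hg : ∀ x ∈ S, DifferentiableAt ℝ g x)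
    (hg' : ∀ x ∈ S, 0 < deriv g x) (hmono : StrictMonoOn (fun x => deriv f x / deriv g x) S)
    (hl : ∀ x ∈ S, ∀ᶠ a in l, a ∈ S ∧ a < x)
    (hf0 : Tendsto f l (𝓝 0)) (hg0 : Tendsto g l (𝓝 0)) :
    StrictMonoOn (fun x => f x / g x) S := by
  have hgpos : ∀ x ∈ S, 0 < g x := fun x hx =>
    (strictMonoOn_of_differentiableAt_of_deriv_pos hS hg hg').pos_of_tendsto_zero hl hg0 hx
  refine strictMonoOn_of_differentiableAt_of_deriv_pos hS
    (fun x hx => (hf x hx).div (hg x hx) (hgpos x hx).ne') fun x hx => ?_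
  have hkey : f x * deriv g x < deriv f x * g x := (div_lt_div_iff₀ (hgpos x hx) (hg' x hx)).1
    (div_lt_deriv_div hS hf hg hg' hmono hl hf0 hg0 hx)
  rw [deriv_fun_div (hf x hx) (hg x hx) (hgpos x hx).ne']
  exact div_pos (by linarith) (pow_pos (hgpos x hx) 2)

theorem strictMonoOn_div_of_strictMonoOn_deriv_div [l.NeBot] (hS : S.OrdConnected)
    (hf : ∀ x ∈ S, DifferentiableAt ℝ f x) (hg : ∀ x ∈ S, DifferentiableAt ℝ g x)
    (hg' : (∀ x ∈ S, 0 < deriv g x) ∨ (∀ x ∈ S, deriv g x < 0))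
    (hmono : StrictMonoOn (fun x => deriv f x / deriv g x) S)
    (hl : ∀ x ∈ S, ∀ᶠ a in l, a ∈ S ∧ a < x)
    (hf0 : Tendsto f l (𝓝 0)) (hg0 : Tendsto g l (𝓝 0)) :
    StrictMonoOn (fun x => f x / g x) S := by
  rcases hg' with hpos | hneg
  · exact strictMonoOn_div_of_deriv_pos hS hf hg hpos hmono hl hf0 hg0
  · have h := strictMonoOn_div_of_deriv_pos (f := fun x => -f x) (g := fun x => -g x) hS
      (fun x hx => (hf x hx).neg) (fun x hx => (hg x hx).neg)
      (fun x hx => by simpa [deriv.fun_neg] using hneg x hx)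
      (by simpa only [deriv.fun_neg, neg_div_neg_eq] using hmono) hl
      (by simpa using hf0.neg) (by simpa using hg0.neg)
    simpa only [neg_div_neg_eq] using h

end LeftEndLimit

namespace EReal

variable {A B : EReal}

theorem eventually_comap_coe_nhdsWithin_Ioo {x : ℝ} (hx : (x : EReal) ∈ Ioo A B) :
    ∀ᶠ a : ℝ in comap (↑) (𝓝[Ioo A B] A), (a : EReal) ∈ Ioo A B ∧ a < x := by
  have hlt : Iio (x : EReal) ∈ 𝓝[Ioo A B] A := nhdsWithin_le_nhds (Iio_mem_nhds hx.1)
  filter_upwards [preimage_mem_comap (inter_mem self_mem_nhdsWithin hlt)] with a ha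
  exact ⟨ha.1, EReal.coe_lt_coe_iff.1 ha.2⟩

theorem comap_coe_nhdsWithin_Ioo_neBot (hAB : A < B) :
    (comap ((↑) : ℝ → EReal) (𝓝[Ioo A B] A)).NeBot := by
  refine (left_nhdsWithin_Ioo_neBot hAB).comap_of_range_mem
    (mem_of_superset self_mem_nhdsWithin fun e he => ?_)
  exact ⟨e.toReal, coe_toReal (ne_top_of_lt he.2) (ne_bot_of_gt he.1)⟩

end EReal

theorem stmt15_general (A B : EReal) (hAB : A < B) (f g : ℝ → ℝ)
    (S : Set ℝ) (hS : S = {x : ℝ | A < (x : EReal) ∧ (x : EReal) < B})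
    (hf : ∀ x ∈ S, DifferentiableAt ℝ f x) (hg : ∀ x ∈ S, DifferentiableAt ℝ g x)
    (hf0 : Filter.Tendsto f (Filter.comap (fun x : ℝ => (x : EReal))
      (nhdsWithin A {e : EReal | A < e ∧ e < B})) (nhds 0))
    (hg0 : Filter.Tendsto g (Filter.comap (fun x : ℝ => (x : EReal))
      (nhdsWithin A {e : EReal | A < e ∧ e < B})) (nhds 0))
    (hg'ne : (∀ x ∈ S, 0 < deriv g x) ∨ (∀ x ∈ S, deriv g x < 0))
    (hmono : StrictMonoOn (fun x => deriv f x / deriv g x) S) :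
    StrictMonoOn (fun x => f x / g x) S := by
  subst hS
  have := EReal.comap_coe_nhdsWithin_Ioo_neBot hAB
  exact strictMonoOn_div_of_strictMonoOn_deriv_div
    (ordConnected_Ioo.preimage_mono EReal.coe_strictMono.monotone) hf hg hg'ne hmono
    (fun x hx => EReal.eventually_comap_coe_nhdsWithin_Ioo hx) hf0 hg0

theorem stmt15 (A B : EReal) (hAB : A < B) (f g : ℝ → ℝ)
    (S : Set ℝ) (hS : S = {x : ℝ | A < (x : EReal) ∧ (x : EReal) < B})
    (hf : ∀ x ∈ S, DifferentiableAt ℝ f x) (hg : ∀ x ∈ S, DifferentiableAt ℝ g x)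
    (hf0 : Filter.Tendsto f (Filter.comap (fun x : ℝ => (x : EReal))
      (nhdsWithin A {e : EReal | A < e ∧ e < B})) (nhds 0))
    (hg0 : Filter.Tendsto g (Filter.comap (fun x : ℝ => (x : EReal))
      (nhdsWithin A {e : EReal | A < e ∧ e < B})) (nhds 0))
    (hgne : (∀ x ∈ S, 0 < g x) ∨ (∀ x ∈ S, g x < 0))
    (hg'ne : (∀ x ∈ S, 0 < deriv g x) ∨ (∀ x ∈ S, deriv g x < 0))
    (hmono : StrictMonoOn (fun x => deriv f x / deriv g x) S) :
    StrictMonoOn (fun x => f x / g x) S :=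
  stmt15_general A B hAB f g S hS hf hg hf0 hg0 hg'ne hmono
end
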